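/- arXiv:2307.03562 — 7 statements merged into one kernel-verified Lean document; each statement's English description precedes it below -/
import Mathlib

section
/- Let $a, b, c$ be nonzero integers with $\gcd(a,b,c) = 1$ and $c > 0$. Let $V \geq 1$ and $\alpha < \beta$ be real numbers. Let $\mathcal{V}$ be the number of triples $(u,v,w)$ of nonzero integers with $\gcd(u,v,w) = 1$, $V \leq v \leq 2V$, $au + bv + cw = 0$, and $\alpha \leq u/v \leq \beta$. Then $\mathcal{V} \leq C\left(\tau(c) + (\beta - \alpha) V^2 \frac{\sigma(c)}{c^2}\right)$ for an absolute constant $C > 0$. -/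
/-!
Group the solutions `(u, v, w)` by `d = gcd(u, v)`, which divides `c` because `gcd(u, v, w) = 1`.
Within one class the fractions `u / v` are pairwise far apart: writing `Δ = u₁v₂ - u₂v₁`, both
`aΔ` and `bΔ` are divisible by `cd` (as `c ∣ au + bv` and `d` divides `u` and `v`), so `cd ∣ Δ`
since `gcd(a, b, c) = 1`; hence two distinct fractions with denominators at most `2V` differ by
at least `cd / (4V²)`. The fractions lie in `[α, β]`, so a class has at most
`4V²(β - α) / (cd) + 1` elements, and summing over `d ∣ c` gives
`τ(c) + 4V²(β - α) σ(c) / c²`.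
-/

open Set

theorem Set.finite_and_ncard_le_of_pairwise_separated {X : Type*} {s : Set X} {f : X → ℝ}
    {α β δ : ℝ} (hδ : 0 < δ) (hαβ : α ≤ β) (hmaps : MapsTo f s (Icc α β))
    (hsep : s.Pairwise fun x y => δ ≤ |f x - f y|) :
    s.Finite ∧ (s.ncard : ℝ) ≤ (β - α) / δ + 1 := by
  set k := ⌊(β - α) / δ⌋
  let g : X → ℤ := fun x => ⌊(f x - α) / δ⌋
  have hg_maps : MapsTo g s (Finset.Icc 0 k : Set ℤ) := fun x hx => by
    obtain ⟨hαx, hxβ⟩ := hmaps hx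
    simp only [Finset.coe_Icc, mem_Icc, g, k]
    exact ⟨Int.floor_nonneg.2 (div_nonneg (sub_nonneg.2 hαx) hδ.le),
      Int.floor_le_floor (div_le_div_of_nonneg_right (by linarith) hδ.le)⟩
  have hg_inj : InjOn g s := fun x hx y hy hxy => by
    by_contra hne
    have hlt := Int.abs_sub_lt_one_of_floor_eq_floor hxy
    rw [← sub_div, sub_sub_sub_cancel_right, abs_div, abs_of_pos hδ, div_lt_one hδ] at hlt
    exact (hsep hx hy hne).not_gt hlt
  have hk : 0 ≤ k := Int.floor_nonneg.2 (div_nonneg (sub_nonneg.2 hαβ) hδ.le)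
  refine ⟨((Finset.Icc 0 k).finite_toSet.subset hg_maps.image_subset).of_finite_image hg_inj, ?_⟩
  calc (s.ncard : ℝ) ≤ (Finset.Icc 0 k).card := by
        exact_mod_cast (ncard_le_ncard_of_injOn g hg_maps hg_inj).trans_eq (ncard_coe_finset _)
    _ = k + 1 := by
        rw [Int.card_Icc, sub_zero, ← Int.cast_natCast, Int.toNat_of_nonneg (by omega)]
        push_cast; ring_nf
    _ ≤ (β - α) / δ + 1 := by linarith [Int.floor_le ((β - α) / δ)]

theorem Nat.sum_inv_divisors_eq {K : Type*} [Field K] [CharZero K] (n : ℕ) :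
    ∑ d ∈ n.divisors, (d : K)⁻¹ = (∑ d ∈ n.divisors, d : ℕ) / n := by
  rw [← Nat.sum_div_divisors n, Nat.cast_sum, Finset.sum_div]
  refine Finset.sum_congr rfl fun d hd => ?_
  have hd0 : (d : K) ≠ 0 := Nat.cast_ne_zero.2 (Nat.pos_of_mem_divisors hd).ne'
  rw [Nat.cast_div (Nat.dvd_of_mem_divisors hd) hd0, inv_div]

theorem Nat.sum_divisors_div_div_add_one (n : ℕ) (x y : ℝ) :
    ∑ d ∈ n.divisors, (x / (n * d / y) + 1) =
      n.divisors.card + x * y * (∑ d ∈ n.divisors, d : ℕ) / n ^ 2 := by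
  have hinv := Nat.sum_inv_divisors_eq (K := ℝ) n
  rw [Finset.sum_add_distrib, Finset.sum_const, nsmul_eq_mul, mul_one, add_comm]
  rw [Finset.sum_congr rfl fun (d : ℕ) _ => show x / (n * d / y) = x * y / n * (d : ℝ)⁻¹ by
    rw [div_div_eq_mul_div, ← div_div, div_eq_mul_inv], ← Finset.mul_sum, hinv]
  ring

namespace Int

theorem eq_and_eq_of_mul_eq_mul_of_gcd_eq {u₁ v₁ u₂ v₂ : ℤ} (hv₁ : 0 < v₁) (hv₂ : 0 < v₂)
    (hg : gcd u₁ v₁ = gcd u₂ v₂) (h : u₁ * v₂ = u₂ * v₁) : u₁ = u₂ ∧ v₁ = v₂ := by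
  have hgcd : gcd u₁ v₁ * v₂.natAbs = gcd u₁ v₁ * v₁.natAbs := by
    rw [← gcd_mul_right, h, mul_comm v₁, hg, gcd_mul_right]
  have hv : v₁ = v₂ := by
    have := Nat.eq_of_mul_eq_mul_left (gcd_pos_iff.2 (Or.inr hv₁.ne')) hgcd
    omega
  subst hv
  exact ⟨mul_right_cancel₀ hv₁.ne' h, rfl⟩

theorem gcd_dvd_of_add_add_eq_zero {a b c u v w : ℤ} (hg : gcd (gcd u v) w = 1)
    (h : a * u + b * v + c * w = 0) : (gcd u v : ℤ) ∣ c := by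
  have hdvd : (gcd u v : ℤ) ∣ c * w := by
    rw [show c * w = -(a * u + b * v) by linarith]
    exact (dvd_add ((gcd_dvd_left u v).mul_left a) ((gcd_dvd_right u v).mul_left b)).neg_right
  exact dvd_of_dvd_mul_left_of_gcd_one hdvd hg

theorem dvd_of_dvd_mul_of_isCoprime_gcd {a b m n : ℤ} (hm : IsCoprime (gcd a b : ℤ) m)
    (ha : m ∣ a * n) (hb : m ∣ b * n) : m ∣ n := by
  refine hm.symm.dvd_of_dvd_mul_left ?_
  rw [gcd_eq_gcd_ab, add_mul, mul_right_comm a, mul_right_comm b]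
  exact dvd_add (ha.mul_right _) (hb.mul_right _)

theorem mul_dvd_cross_of_dvd_add {a b c d u₁ v₁ u₂ v₂ : ℤ} (hco : IsCoprime (gcd a b : ℤ) c)
    (hdc : d ∣ c) (h₁ : c ∣ a * u₁ + b * v₁) (h₂ : c ∣ a * u₂ + b * v₂)
    (hu₁ : d ∣ u₁) (hv₁ : d ∣ v₁) (hu₂ : d ∣ u₂) (hv₂ : d ∣ v₂) :
    c * d ∣ u₁ * v₂ - u₂ * v₁ := by
  refine dvd_of_dvd_mul_of_isCoprime_gcd (hco.mul_right (hco.of_isCoprime_of_dvd_right hdc))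
    ?_ ?_
  · rw [show a * (u₁ * v₂ - u₂ * v₁) = (a * u₁ + b * v₁) * v₂ - (a * u₂ + b * v₂) * v₁ by ring]
    exact dvd_sub (mul_dvd_mul h₁ hv₂) (mul_dvd_mul h₂ hv₁)
  · rw [show b * (u₁ * v₂ - u₂ * v₁) = (a * u₂ + b * v₂) * u₁ - (a * u₁ + b * v₁) * u₂ by ring]
    exact dvd_sub (mul_dvd_mul h₂ hu₁) (mul_dvd_mul h₁ hu₂)

end Int

def primitiveSolutions (a b c : ℤ) (V α β : ℝ) : Set (ℤ × ℤ × ℤ) :=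
  {p | p.1 ≠ 0 ∧ p.2.1 ≠ 0 ∧ p.2.2 ≠ 0 ∧
    Int.gcd (Int.gcd p.1 p.2.1) p.2.2 = 1 ∧
    V ≤ (p.2.1 : ℝ) ∧ (p.2.1 : ℝ) ≤ 2 * V ∧
    a * p.1 + b * p.2.1 + c * p.2.2 = 0 ∧
    α ≤ (p.1 : ℝ) / (p.2.1 : ℝ) ∧ (p.1 : ℝ) / (p.2.1 : ℝ) ≤ β}

namespace primitiveSolutions

variable {a b c : ℤ} {V α β : ℝ} {p q : ℤ × ℤ × ℤ}

theorem snd_pos (hV : 0 < V) (hp : p ∈ primitiveSolutions a b c V α β) : 0 < p.2.1 := by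
  exact_mod_cast hV.trans_le hp.2.2.2.2.1

theorem div_mem_Icc (hp : p ∈ primitiveSolutions a b c V α β) :
    (p.1 : ℝ) / p.2.1 ∈ Icc α β :=
  ⟨hp.2.2.2.2.2.2.2.1, hp.2.2.2.2.2.2.2.2⟩

theorem dvd_mul_add_mul (hp : p ∈ primitiveSolutions a b c V α β) : c ∣ a * p.1 + b * p.2.1 :=
  ⟨-p.2.2, by linarith [hp.2.2.2.2.2.2.1]⟩

theorem gcd_dvd (hp : p ∈ primitiveSolutions a b c V α β) : (Int.gcd p.1 p.2.1 : ℤ) ∣ c :=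
  Int.gcd_dvd_of_add_add_eq_zero hp.2.2.2.1 hp.2.2.2.2.2.2.1

theorem eq_of_gcd_eq_of_div_eq (hc : c ≠ 0) (hV : 0 < V) (hp : p ∈ primitiveSolutions a b c V α β)
    (hq : q ∈ primitiveSolutions a b c V α β) (hg : Int.gcd p.1 p.2.1 = Int.gcd q.1 q.2.1)
    (hr : (p.1 : ℝ) / p.2.1 = (q.1 : ℝ) / q.2.1) : p = q := by
  obtain ⟨u₁, v₁, w₁⟩ := p
  obtain ⟨u₂, v₂, w₂⟩ := q
  have hv₁ := snd_pos hV hp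
  have hv₂ := snd_pos hV hq
  rw [div_eq_div_iff (by positivity) (by positivity)] at hr
  obtain ⟨rfl, rfl⟩ := Int.eq_and_eq_of_mul_eq_mul_of_gcd_eq hv₁ hv₂ hg (by exact_mod_cast hr)
  have hw : c * w₁ = c * w₂ := by linarith [hp.2.2.2.2.2.2.1, hq.2.2.2.2.2.2.1]
  rw [mul_left_cancel₀ hc hw]

theorem le_abs_div_sub_div (hco : IsCoprime (Int.gcd a b : ℤ) c) (hV : 0 < V)
    (hp : p ∈ primitiveSolutions a b c V α β) (hq : q ∈ primitiveSolutions a b c V α β)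
    (hg : Int.gcd p.1 p.2.1 = Int.gcd q.1 q.2.1) (hr : (p.1 : ℝ) / p.2.1 ≠ (q.1 : ℝ) / q.2.1) :
    c * Int.gcd p.1 p.2.1 / (4 * V ^ 2) ≤ |(p.1 : ℝ) / p.2.1 - (q.1 : ℝ) / q.2.1| := by
  obtain ⟨u₁, v₁, w₁⟩ := p
  obtain ⟨u₂, v₂, w₂⟩ := q
  dsimp only at hg hr ⊢
  set d : ℤ := (Int.gcd u₁ v₁ : ℤ)
  have hv₁ : (0 : ℝ) < v₁ := by exact_mod_cast snd_pos hV hp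
  have hv₂ : (0 : ℝ) < v₂ := by exact_mod_cast snd_pos hV hq
  have hvv : (v₁ : ℝ) * v₂ ≤ 4 * V ^ 2 := by nlinarith [hp.2.2.2.2.2.1, hq.2.2.2.2.2.1]
  have hcross : c * d ∣ u₁ * v₂ - u₂ * v₁ := by
    refine Int.mul_dvd_cross_of_dvd_add hco (gcd_dvd hp) (dvd_mul_add_mul hp)
      (dvd_mul_add_mul hq) (Int.gcd_dvd_left _ _) (Int.gcd_dvd_right _ _) ?_ ?_
    · simpa only [d, hg] using Int.gcd_dvd_left u₂ v₂
    · simpa only [d, hg] using Int.gcd_dvd_right u₂ v₂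
  have hne : u₁ * v₂ - u₂ * v₁ ≠ 0 := fun h => hr <| by
    rw [div_eq_div_iff hv₁.ne' hv₂.ne']; exact_mod_cast sub_eq_zero.1 h
  have hle : ((c * d : ℤ) : ℝ) ≤ |((u₁ * v₂ - u₂ * v₁ : ℤ) : ℝ)| := by
    rw [← Int.cast_abs]
    exact_mod_cast Int.le_of_dvd (abs_pos.2 hne) ((dvd_abs _ _).2 hcross)
  calc (c : ℝ) * d / (4 * V ^ 2) ≤ |((u₁ * v₂ - u₂ * v₁ : ℤ) : ℝ)| / (v₁ * v₂) := by
        exact div_le_div₀ (abs_nonneg _) (by exact_mod_cast hle) (by positivity) hvv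
    _ = |(u₁ : ℝ) / v₁ - u₂ / v₂| := by
        rw [div_sub_div _ _ hv₁.ne' hv₂.ne', abs_div, abs_of_pos (mul_pos hv₁ hv₂)]
        push_cast; ring_nf

theorem finite_and_ncard_le_of_gcd_eq (hco : IsCoprime (Int.gcd a b : ℤ) c) (hc : 0 < c)
    (hV : 0 < V) (hαβ : α ≤ β) {s : Set (ℤ × ℤ × ℤ)} (hs : s ⊆ primitiveSolutions a b c V α β)
    {d : ℕ} (hd : 0 < d) (hgcd : ∀ p ∈ s, Int.gcd p.1 p.2.1 = d) :
    s.Finite ∧ (s.ncard : ℝ) ≤ (β - α) / (c * d / (4 * V ^ 2)) + 1 := by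
  refine Set.finite_and_ncard_le_of_pairwise_separated (f := fun p => (p.1 : ℝ) / p.2.1)
    (by positivity) hαβ (fun p hp => div_mem_Icc (hs hp)) fun p hp q hq hpq => ?_
  have hg : Int.gcd p.1 p.2.1 = Int.gcd q.1 q.2.1 := (hgcd p hp).trans (hgcd q hq).symm
  by_cases hr : (p.1 : ℝ) / p.2.1 = (q.1 : ℝ) / q.2.1
  · exact absurd (eq_of_gcd_eq_of_div_eq hc.ne' hV (hs hp) (hs hq) hg hr) hpq
  · simpa only [hgcd p hp] using le_abs_div_sub_div hco hV (hs hp) (hs hq) hg hr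

end primitiveSolutions

theorem iwaniec_mozzochi_lemma :
    ∃ C : ℝ, 0 < C ∧
      ∀ (a b c : ℤ), a ≠ 0 → b ≠ 0 → 0 < c → Int.gcd (Int.gcd a b) c = 1 →
      ∀ (V α β : ℝ), 1 ≤ V → α < β →
        let S : Set (ℤ × ℤ × ℤ) :=
          {p | p.1 ≠ 0 ∧ p.2.1 ≠ 0 ∧ p.2.2 ≠ 0 ∧
            Int.gcd (Int.gcd p.1 p.2.1) p.2.2 = 1 ∧
            V ≤ (p.2.1 : ℝ) ∧ (p.2.1 : ℝ) ≤ 2 * V ∧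
            a * p.1 + b * p.2.1 + c * p.2.2 = 0 ∧
            α ≤ (p.1 : ℝ) / (p.2.1 : ℝ) ∧ (p.1 : ℝ) / (p.2.1 : ℝ) ≤ β}
        S.Finite ∧
          (S.ncard : ℝ) ≤ C * ((c.toNat.divisors.card : ℝ) +
            (β - α) * V ^ 2 * ((∑ d ∈ c.toNat.divisors, d : ℕ) : ℝ) / (c : ℝ) ^ 2) := by
  refine ⟨4, by norm_num, fun a b c _ _ hc hco V α β hV hαβ => ?_⟩
  change (primitiveSolutions a b c V α β).Finite ∧ _
  obtain ⟨n, rfl⟩ := Int.eq_ofNat_of_zero_le hc.le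
  simp only [Int.toNat_natCast, Int.cast_natCast]
  set S := primitiveSolutions a b n V α β
  let F : ℕ → Set (ℤ × ℤ × ℤ) := fun d => {p ∈ S | Int.gcd p.1 p.2.1 = d}
  have hF : ∀ d ∈ n.divisors, (F d).Finite ∧
      ((F d).ncard : ℝ) ≤ (β - α) / (n * d / (4 * V ^ 2)) + 1 := fun d hd => by
    simpa only [Int.cast_natCast] using primitiveSolutions.finite_and_ncard_le_of_gcd_eq
      (Int.isCoprime_iff_gcd_eq_one.2 hco) hc (one_pos.trans_le hV) hαβ.le (sep_subset _ _)
      (Nat.pos_of_mem_divisors hd) fun p hp => hp.2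
  have hcover : S ⊆ ⋃ d ∈ n.divisors, F d := fun p hp => mem_biUnion (x := Int.gcd p.1 p.2.1)
    (Nat.mem_divisors.2 ⟨Int.ofNat_dvd.1 (primitiveSolutions.gcd_dvd hp), by omega⟩) ⟨hp, rfl⟩
  have hFfin : (⋃ d ∈ n.divisors, F d).Finite :=
    n.divisors.finite_toSet.biUnion fun d hd => (hF d hd).1
  refine ⟨hFfin.subset hcover, ?_⟩
  calc (S.ncard : ℝ) ≤ ∑ d ∈ n.divisors, ((F d).ncard : ℝ) := by
        exact_mod_cast (ncard_le_ncard hcover hFfin).trans (n.divisors.set_ncard_biUnion_le F)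
    _ ≤ ∑ d ∈ n.divisors, ((β - α) / (n * d / (4 * V ^ 2)) + 1) :=
        Finset.sum_le_sum fun d hd => (hF d hd).2
    _ = n.divisors.card + (β - α) * (4 * V ^ 2) * (∑ d ∈ n.divisors, d : ℕ) / n ^ 2 :=
        Nat.sum_divisors_div_div_add_one n _ _
    _ ≤ _ := by
        have hτ : (0 : ℝ) ≤ n.divisors.card := Nat.cast_nonneg _
        linarith [show (β - α) * (4 * V ^ 2) * ((∑ d ∈ n.divisors, d : ℕ) : ℝ) / n ^ 2 =
          4 * ((β - α) * V ^ 2 * ((∑ d ∈ n.divisors, d : ℕ) : ℝ) / n ^ 2) by ring]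
end

section
/- Let $R, Q, H$ be real numbers with $R \geq 1$, $Q \geq 1$, $H \geq 2R$, and let $\delta \geq 1$. The number of integer points $(r, q_1, q_2, h_1, h_2, d) \in \mathbb{Z}^6$ with $0 < |r| < R$, $Q \leq |q_i| < 2Q$, $H \leq h_i < 2H$, $q_1 q_2 > 0$, $0 < |d| \leq C(1+\delta)Q$ satisfying $rd + h_1 q_1 - h_2 q_2 = 0$ is at most $C'_\varepsilon (RQH)^{1+\varepsilon}(1 + Q\delta)$ for every $\varepsilon > 0$. -/
/-!
Fixing `(r, q₁, h₁, d)` determines `N = r d + h₁ q₁ = h₂ q₂`, which is nonzero with `|N| ≤ 4 Q H`;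
since `h₂ > 0` is a divisor of `|N|` and then fixes `q₂`, each of the `O(R Q H (1 + Q δ))` choices
of `(r, q₁, h₁, d)` (here `δ ≥ 1` makes the range of `d` of size `O(Q δ)`) contributes at most
`τ(|N|) ≪_ε (Q H)^ε` solutions. The divisor bound `τ(n) ≪_ε n^ε` comes from
`τ(n) / n^ε = ∏_{p^a ∥ n} (a + 1) / p^{a ε}`, whose factors are at most `1` once `p ≥ 2^{1/ε}` and
are uniformly bounded for the finitely many smaller primes.
-/

open Finset Metric

theorem exists_add_one_le_mul_pow {t : ℝ} (ht : 1 < t) :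
    ∃ K : ℝ, ∀ a : ℕ, (a + 1 : ℝ) ≤ K * t ^ a := by
  refine ⟨max 1 (t - 1)⁻¹, fun a => ?_⟩
  have hbern : 1 + a * (t - 1) ≤ t ^ a := by
    simpa using one_add_mul_le_pow (a := t - 1) (by linarith) a
  have hK : 1 ≤ max 1 (t - 1)⁻¹ * (t - 1) := by
    calc (1 : ℝ) = (t - 1)⁻¹ * (t - 1) := (inv_mul_cancel₀ (by linarith)).symm
      _ ≤ _ := mul_le_mul_of_nonneg_right (le_max_right _ _) (by linarith)
  calc (a + 1 : ℝ) ≤ max 1 (t - 1)⁻¹ * (1 + a * (t - 1)) := by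
        nlinarith [le_max_left 1 (t - 1)⁻¹, (Nat.cast_nonneg a : (0 : ℝ) ≤ a)]
    _ ≤ max 1 (t - 1)⁻¹ * t ^ a := mul_le_mul_of_nonneg_left hbern (by positivity)

theorem Nat.cast_rpow_eq_prod_primeFactors {n : ℕ} (hn : n ≠ 0) (s : ℝ) :
    (n : ℝ) ^ s = ∏ p ∈ n.primeFactors, ((p : ℝ) ^ s) ^ n.factorization p := by
  conv_lhs => rw [← Nat.prod_factorization_pow_eq_self hn, Finsupp.prod, Nat.support_factorization]
  rw [Nat.cast_prod, ← Real.finsetProd_rpow _ _ fun p _ => by positivity]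
  refine prod_congr rfl fun p _ => ?_
  rw [Nat.cast_pow, Real.rpow_pow_comm (Nat.cast_nonneg p)]

theorem Nat.exists_card_divisors_le_mul_rpow {ε : ℝ} (hε : 0 < ε) :
    ∃ C : ℝ, 0 < C ∧ ∀ n : ℕ, (#n.divisors : ℝ) ≤ C * (n : ℝ) ^ ε := by
  obtain ⟨K, hK⟩ := exists_add_one_le_mul_pow (Real.one_lt_rpow (by norm_num : (1 : ℝ) < 2) hε)
  have hK₁ : 1 ≤ K := by simpa using hK 0
  set B := ⌈(2 : ℝ) ^ ε⁻¹⌉₊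
  refine ⟨K ^ B, by positivity, fun n => ?_⟩
  rcases eq_or_ne n 0 with rfl | hn
  · simp [Real.zero_rpow hε.ne']
  have hfactor : ∀ p ∈ n.primeFactors, ((n.factorization p + 1 : ℕ) : ℝ) ≤
      (if p < B then K else 1) * ((p : ℝ) ^ ε) ^ n.factorization p := by
    intro p hp
    have hp₂ : (2 : ℝ) ≤ p := by exact_mod_cast (Nat.prime_of_mem_primeFactors hp).two_le
    split_ifs with hpB
    · calc ((n.factorization p + 1 : ℕ) : ℝ) ≤ K * ((2 : ℝ) ^ ε) ^ n.factorization p := by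
            exact_mod_cast hK _
        _ ≤ K * ((p : ℝ) ^ ε) ^ n.factorization p := by gcongr
    · have h₂ : (2 : ℝ) ≤ (p : ℝ) ^ ε := by
        calc (2 : ℝ) = ((2 : ℝ) ^ ε⁻¹) ^ ε := by
              rw [← Real.rpow_mul (by norm_num), inv_mul_cancel₀ hε.ne', Real.rpow_one]
          _ ≤ (p : ℝ) ^ ε := by
              gcongr
              exact (Nat.le_ceil _).trans (by exact_mod_cast not_lt.mp hpB)
      rw [one_mul]
      calc ((n.factorization p + 1 : ℕ) : ℝ) ≤ 2 ^ n.factorization p := by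
            exact_mod_cast Nat.lt_two_pow_self
        _ ≤ ((p : ℝ) ^ ε) ^ n.factorization p := by gcongr
  have hsmall : ∏ p ∈ n.primeFactors, (if p < B then K else 1) ≤ K ^ B := by
    rw [prod_ite, prod_const, prod_const_one, mul_one]
    refine pow_le_pow_right₀ hK₁ ((card_le_card fun p hp => ?_).trans (card_range B).le)
    exact mem_range.mpr (mem_filter.mp hp).2
  calc (#n.divisors : ℝ) = ∏ p ∈ n.primeFactors, ((n.factorization p + 1 : ℕ) : ℝ) := by
        rw [Nat.card_divisors hn, Nat.cast_prod]
    _ ≤ ∏ p ∈ n.primeFactors, (if p < B then K else 1) * ((p : ℝ) ^ ε) ^ n.factorization p :=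
        prod_le_prod (fun _ _ => by positivity) hfactor
    _ ≤ K ^ B * (n : ℝ) ^ ε := by
        rw [prod_mul_distrib, Nat.cast_rpow_eq_prod_primeFactors hn]
        gcongr

theorem Set.ncard_le_mul_ncard_of_mapsTo {α β : Type*} {s : Set α} {t : Set β} {f : α → β}
    (hf : MapsTo f s t) (ht : t.Finite) {n : ℝ}
    (hn : ∀ b ∈ t, ((s ∩ f ⁻¹' {b}).ncard : ℝ) ≤ n) :
    (s.ncard : ℝ) ≤ n * t.ncard := by
  classical
  by_cases hs : s.Finite
  · have hsum : s.ncard = ∑ b ∈ ht.toFinset, (s ∩ f ⁻¹' {b}).ncard := by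
      rw [ncard_eq_toFinset_card s hs,
        card_eq_sum_card_fiberwise (t := ht.toFinset) (by simpa using hf)]
      refine sum_congr rfl fun b _ => ?_
      rw [← ncard_coe_finset]
      congr
      ext
      simp
    rw [hsum, ncard_eq_toFinset_card t ht, Nat.cast_sum, mul_comm, ← nsmul_eq_mul]
    exact sum_le_card_nsmul _ _ _ fun b hb => hn b (ht.mem_toFinset.mp hb)
  · obtain ⟨a, ha⟩ := Infinite.nonempty hs
    rw [Infinite.ncard hs, Nat.cast_zero]
    exact mul_nonneg ((Nat.cast_nonneg _).trans (hn (f a) (hf ha))) (Nat.cast_nonneg _)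

theorem Int.ncard_closedBall_zero_le {x : ℝ} (hx : 0 ≤ x) :
    ((closedBall (0 : ℤ) x).ncard : ℝ) ≤ 2 * x + 1 := by
  have hfloor : (0 : ℤ) ≤ ⌊x⌋ := Int.floor_nonneg.mpr hx
  rw [Int.closedBall_eq_Icc, Int.cast_zero, zero_sub, zero_add, Int.ceil_neg, ← coe_Icc,
    Set.ncard_coe_finset, Int.card_Icc, sub_neg_eq_add, ← Int.cast_natCast,
    Int.toNat_of_nonneg (by omega)]
  push_cast
  linarith [Int.floor_le x]

def solutionTuples (C R Q H δ : ℝ) : Set (ℤ × ℤ × ℤ × ℤ × ℤ × ℤ) :=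
  {p | ∃ r q₁ q₂ h₁ h₂ d : ℤ,
    p = (r, q₁, q₂, h₁, h₂, d) ∧
    r ≠ 0 ∧ |(r : ℝ)| < R ∧
    Q ≤ |(q₁ : ℝ)| ∧ |(q₁ : ℝ)| < 2 * Q ∧
    Q ≤ |(q₂ : ℝ)| ∧ |(q₂ : ℝ)| < 2 * Q ∧
    H ≤ (h₁ : ℝ) ∧ (h₁ : ℝ) < 2 * H ∧
    H ≤ (h₂ : ℝ) ∧ (h₂ : ℝ) < 2 * H ∧
    0 < q₁ * q₂ ∧
    d ≠ 0 ∧ |(d : ℝ)| ≤ C * (1 + δ) * Q ∧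
    r * d + h₁ * q₁ - h₂ * q₂ = 0}

def forgetH₂Q₂ (p : ℤ × ℤ × ℤ × ℤ × ℤ × ℤ) : ℤ × ℤ × ℤ × ℤ :=
  (p.1, p.2.1, p.2.2.2.1, p.2.2.2.2.2)

section solutionTuples

variable {C R Q H δ : ℝ}

theorem mapsTo_forgetH₂Q₂_solutionTuples :
    Set.MapsTo forgetH₂Q₂ (solutionTuples C R Q H δ)
      (closedBall 0 R ×ˢ closedBall 0 (2 * Q) ×ˢ closedBall 0 (2 * H) ×ˢ
        closedBall 0 (C * (1 + δ) * Q)) := by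
  rintro _ ⟨r, q₁, q₂, h₁, h₂, d, rfl, -, hr, -, hq₁, -, -, hh₁lo, hh₁hi, -, -, -, -, hd, -⟩
  simp only [forgetH₂Q₂, Set.mem_prod, mem_closedBall_zero_iff, Int.norm_eq_abs]
  exact ⟨hr.le, hq₁.le, abs_le.mpr ⟨by linarith, hh₁hi.le⟩, hd⟩

theorem solutionTuples_inter_preimage_subset (r q₁ h₁ d : ℤ) :
    solutionTuples C R Q H δ ∩ forgetH₂Q₂ ⁻¹' {(r, q₁, h₁, d)} ⊆
      (fun k : ℕ => (r, q₁, (r * d + h₁ * q₁) / k, h₁, (k : ℤ), d)) ''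
        (r * d + h₁ * q₁).natAbs.divisors := by
  rintro _ ⟨⟨r, q₁, q₂, h₁, h₂, d, rfl, -, -, -, -, hq₂lo, hq₂hi, -, -, hh₂lo, hh₂hi, -, -, -, heq⟩,
    hb⟩
  simp only [forgetH₂Q₂, Set.mem_preimage, Set.mem_singleton_iff, Prod.mk.injEq] at hb
  obtain ⟨rfl, rfl, rfl, rfl⟩ := hb
  have hh₂ : 0 < h₂ := by exact_mod_cast (by linarith : (0 : ℝ) < h₂)
  have hq₂ : q₂ ≠ 0 := by exact_mod_cast abs_pos.mp (by linarith : 0 < |(q₂ : ℝ)|)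
  have hN : r * d + h₁ * q₁ = h₂ * q₂ := by linarith
  refine ⟨h₂.natAbs, ?_, ?_⟩
  · rw [hN, Finset.mem_coe, Nat.mem_divisors, Int.natAbs_mul]
    exact ⟨dvd_mul_right _ _, mul_ne_zero (by omega) (by omega)⟩
  · simp only [Int.natAbs_of_nonneg hh₂.le, hN, Int.mul_ediv_cancel_left _ hh₂.ne']

theorem abs_mul_add_mul_le_of_mem_solutionTuples {r q₁ q₂ h₁ h₂ d : ℤ}
    (hp : (r, q₁, q₂, h₁, h₂, d) ∈ solutionTuples C R Q H δ) :
    |((r * d + h₁ * q₁ : ℤ) : ℝ)| ≤ 4 * Q * H := by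
  obtain ⟨_, _, _, _, _, _, hp, -, -, -, -, -, hq₂hi, -, -, hh₂lo, hh₂hi, -, -, -, heq⟩ := hp
  simp only [Prod.mk.injEq] at hp
  obtain ⟨rfl, rfl, rfl, rfl, rfl, rfl⟩ := hp
  rw [show r * d + h₁ * q₁ = h₂ * q₂ by linarith, Int.cast_mul, abs_mul,
    abs_of_pos (by linarith : (0 : ℝ) < h₂)]
  nlinarith [abs_nonneg (q₂ : ℝ)]

theorem ncard_solutionTuples_inter_preimage_le {Cd ε : ℝ}
    (hdiv : ∀ n : ℕ, (#n.divisors : ℝ) ≤ Cd * (n : ℝ) ^ ε) (hε : 0 ≤ ε) (hQ : 0 ≤ Q)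
    (hH : 0 ≤ H) (r q₁ h₁ d : ℤ) :
    ((solutionTuples C R Q H δ ∩ forgetH₂Q₂ ⁻¹' {(r, q₁, h₁, d)}).ncard : ℝ) ≤
      Cd * (4 * Q * H) ^ ε := by
  have hCd : 1 ≤ Cd := by simpa using hdiv 1
  rcases (solutionTuples C R Q H δ ∩ forgetH₂Q₂ ⁻¹' {(r, q₁, h₁, d)}).eq_empty_or_nonempty
    with hempty | ⟨_, ⟨⟨r, q₁, q₂, h₁, h₂, d, rfl, hp⟩, hb⟩⟩
  · rw [hempty, Set.ncard_empty, Nat.cast_zero]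
    positivity
  simp only [forgetH₂Q₂, Set.mem_preimage, Set.mem_singleton_iff, Prod.mk.injEq] at hb
  obtain ⟨rfl, rfl, rfl, rfl⟩ := hb
  have hN := abs_mul_add_mul_le_of_mem_solutionTuples ⟨_, _, _, _, _, _, rfl, hp⟩
  calc ((solutionTuples C R Q H δ ∩ forgetH₂Q₂ ⁻¹' {(r, q₁, h₁, d)}).ncard : ℝ)
      ≤ #(r * d + h₁ * q₁).natAbs.divisors := Nat.cast_le.mpr <|
        (Set.ncard_le_ncard (solutionTuples_inter_preimage_subset r q₁ h₁ d)
          ((finite_toSet _).image _)).trans <|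
            (Set.ncard_image_le (finite_toSet _)).trans_eq (Set.ncard_coe_finset _)
    _ ≤ Cd * ((r * d + h₁ * q₁).natAbs : ℝ) ^ ε := hdiv _
    _ ≤ Cd * (4 * Q * H) ^ ε := by
        rw [Nat.cast_natAbs, Int.cast_abs]
        exact mul_le_mul_of_nonneg_left (Real.rpow_le_rpow (abs_nonneg _) hN hε) (by linarith)

theorem ncard_closedBall_prod_le (hR : 1 ≤ R) (hQ : 1 ≤ Q) (hH : 1 ≤ H) (hδ : 1 ≤ δ)
    (hC : 0 ≤ C) :
    ((closedBall (0 : ℤ) R ×ˢ closedBall (0 : ℤ) (2 * Q) ×ˢ closedBall (0 : ℤ) (2 * H) ×ˢ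
        closedBall (0 : ℤ) (C * (1 + δ) * Q)).ncard : ℝ) ≤
      75 * (4 * C + 1) * (R * Q * H) * (1 + Q * δ) := by
  simp only [Set.ncard_prod, Nat.cast_mul]
  calc _ ≤ (2 * R + 1) * ((2 * (2 * Q) + 1) *
          ((2 * (2 * H) + 1) * (2 * (C * (1 + δ) * Q) + 1))) := by
        gcongr <;> exact Int.ncard_closedBall_zero_le (by positivity)
    _ ≤ (3 * R) * ((5 * Q) * ((5 * H) * ((4 * C + 1) * (1 + Q * δ)))) := by
        gcongr <;>
          nlinarith [mul_nonneg hC (sub_nonneg.mpr hδ), mul_nonneg hC (by linarith : (0 : ℝ) ≤ Q)]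
    _ = 75 * (4 * C + 1) * (R * Q * H) * (1 + Q * δ) := by ring

end solutionTuples

theorem lemma7_case_delta_ge_one :
    ∀ C : ℝ, 0 < C → ∀ ε : ℝ, 0 < ε → ∃ C' : ℝ, 0 < C' ∧
      ∀ (R Q H δ : ℝ), 1 ≤ R → 1 ≤ Q → 2 * R ≤ H → 1 ≤ δ →
        let S : Set (ℤ × ℤ × ℤ × ℤ × ℤ × ℤ) :=
          {p | ∃ r q₁ q₂ h₁ h₂ d : ℤ,
            p = (r, q₁, q₂, h₁, h₂, d) ∧
            r ≠ 0 ∧ |(r : ℝ)| < R ∧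
            Q ≤ |(q₁ : ℝ)| ∧ |(q₁ : ℝ)| < 2 * Q ∧
            Q ≤ |(q₂ : ℝ)| ∧ |(q₂ : ℝ)| < 2 * Q ∧
            H ≤ (h₁ : ℝ) ∧ (h₁ : ℝ) < 2 * H ∧
            H ≤ (h₂ : ℝ) ∧ (h₂ : ℝ) < 2 * H ∧
            0 < q₁ * q₂ ∧
            d ≠ 0 ∧ |(d : ℝ)| ≤ C * (1 + δ) * Q ∧
            r * d + h₁ * q₁ - h₂ * q₂ = 0}
        (S.ncard : ℝ) ≤ C' * (R * Q * H) ^ (1 + ε) * (1 + Q * δ) := by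
  intro C hC ε hε
  obtain ⟨Cd, hCd, hdiv⟩ := Nat.exists_card_divisors_le_mul_rpow hε
  refine ⟨Cd * 4 ^ ε * (75 * (4 * C + 1)), by positivity, fun R Q H δ hR hQ hH hδ => ?_⟩
  have hH₁ : 1 ≤ H := by linarith
  have hRQH : 0 < R * Q * H := by positivity
  have hbox : (closedBall (0 : ℤ) R ×ˢ closedBall (0 : ℤ) (2 * Q) ×ˢ closedBall (0 : ℤ) (2 * H) ×ˢ
      closedBall (0 : ℤ) (C * (1 + δ) * Q)).Finite := by
    refine .prod ?_ (.prod ?_ (.prod ?_ ?_)) <;> exact (isCompact_closedBall _ _).finite_of_discrete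
  calc ((solutionTuples C R Q H δ).ncard : ℝ)
      ≤ Cd * (4 * Q * H) ^ ε * (closedBall (0 : ℤ) R ×ˢ closedBall (0 : ℤ) (2 * Q) ×ˢ
          closedBall (0 : ℤ) (2 * H) ×ˢ closedBall (0 : ℤ) (C * (1 + δ) * Q)).ncard :=
        Set.ncard_le_mul_ncard_of_mapsTo mapsTo_forgetH₂Q₂_solutionTuples hbox
          fun ⟨r, q₁, h₁, d⟩ _ => ncard_solutionTuples_inter_preimage_le hdiv hε.le
            (by linarith) (by linarith) r q₁ h₁ d
    _ ≤ Cd * (4 * (R * Q * H)) ^ ε * (75 * (4 * C + 1) * (R * Q * H) * (1 + Q * δ)) := by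
        gcongr Cd * ?_ ^ ε * ?_
        · nlinarith [mul_nonneg (sub_nonneg.mpr hR) (by positivity : (0 : ℝ) ≤ Q * H)]
        · exact ncard_closedBall_prod_le hR hQ hH₁ hδ hC.le
    _ = Cd * 4 ^ ε * (75 * (4 * C + 1)) * (R * Q * H) ^ (1 + ε) * (1 + Q * δ) := by
        rw [Real.mul_rpow (by norm_num) hRQH.le, Real.rpow_add hRQH, Real.rpow_one]
        ring
end

section
/- Let $R, Q, H$ be positive reals with $H \geq 2R$ and $0 < \delta$. Suppose integers $r, d, q_1, q_2, h_1, h_2$ satisfy $0 < |r| < R$, $Q \leq |q_i| < 2Q$, $H \leq h_i < 2H$, $rd + h_1 q_1 = h_2 q_2$, and $|rd^2 + 2h_1 q_1 d + h_1 q_1^2 - h_2 q_2^2| \leq \delta H Q^2$. Then $\left| \frac{q_2^2}{q_1^2} - \frac{h_1(h_1 - r)}{h_2(h_2 - r)} \right| \leq 8\delta \frac{|r|}{H}$. -/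
theorem elimination_inequality
    (R Q H δ : ℝ) (hR : 0 < R) (hQ : 0 < Q) (hH : 2 * R ≤ H) (hδ : 0 < δ)
    (r d q₁ q₂ h₁ h₂ : ℤ)
    (hr : r ≠ 0) (hrR : |(r : ℝ)| < R)
    (hq₁ : Q ≤ |(q₁ : ℝ)|) (hq₁' : |(q₁ : ℝ)| < 2 * Q)
    (hq₂ : Q ≤ |(q₂ : ℝ)|) (hq₂' : |(q₂ : ℝ)| < 2 * Q)
    (hh₁ : H ≤ (h₁ : ℝ)) (hh₁' : (h₁ : ℝ) < 2 * H)
    (hh₂ : H ≤ (h₂ : ℝ)) (hh₂' : (h₂ : ℝ) < 2 * H)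
    (hlin : r * d + h₁ * q₁ = h₂ * q₂)
    (hquad : |(r : ℝ) * d ^ 2 + 2 * h₁ * q₁ * d + h₁ * q₁ ^ 2 - h₂ * q₂ ^ 2|
        ≤ δ * H * Q ^ 2) :
    |((q₂ : ℝ) ^ 2 / (q₁ : ℝ) ^ 2) -
        ((h₁ : ℝ) * ((h₁ : ℝ) - r)) / ((h₂ : ℝ) * ((h₂ : ℝ) - r))|
      ≤ 8 * δ * |(r : ℝ)| / H := by
  have hHpos : 0 < H := lt_of_lt_of_le (by linarith) hH
  have hrRle : -R < (r : ℝ) ∧ (r : ℝ) < R := abs_lt.mp hrR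
  have hq1ne : (q₁ : ℝ) ≠ 0 := by
    intro h; rw [h, abs_zero] at hq₁; linarith
  have hq1sq : Q ^ 2 ≤ (q₁ : ℝ) ^ 2 := by
    have := sq_abs (q₁ : ℝ)
    nlinarith [hq₁, hQ.le]
  have hdiff : H / 2 < (h₂ : ℝ) - r := by
    have : (r : ℝ) < R := hrRle.2
    linarith
  have hh2pos : 0 < (h₂ : ℝ) := lt_of_lt_of_le hHpos hh₂
  have hdpos : 0 < (h₂ : ℝ) - r := lt_trans (by linarith) hdiff
  have hlinR : (r : ℝ) * d + h₁ * q₁ = h₂ * q₂ := by exact_mod_cast hlin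
  set E : ℝ := (r : ℝ) * d ^ 2 + 2 * h₁ * q₁ * d + h₁ * q₁ ^ 2 - h₂ * q₂ ^ 2 with hE
  have hprodne : (h₂ : ℝ) * ((h₂ : ℝ) - r) ≠ 0 := by positivity
  have hden : (q₁ : ℝ) ^ 2 * ((h₂ : ℝ) * ((h₂ : ℝ) - r)) ≠ 0 := by positivity
  have hkey : (h₂ : ℝ) * ((h₂ : ℝ) - r) * q₂ ^ 2 - h₁ * ((h₁ : ℝ) - r) * q₁ ^ 2
      = r * E := by
    rw [hE]
    linear_combination (-((r : ℝ) * d + h₁ * q₁ + h₂ * q₂)) * hlinR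
  have hident : ((q₂ : ℝ) ^ 2 / (q₁ : ℝ) ^ 2) -
      ((h₁ : ℝ) * ((h₁ : ℝ) - r)) / ((h₂ : ℝ) * ((h₂ : ℝ) - r))
      = (r : ℝ) * E / ((q₁ : ℝ) ^ 2 * ((h₂ : ℝ) * ((h₂ : ℝ) - r))) := by
    rw [← hkey, div_sub_div _ _ (pow_ne_zero 2 hq1ne) hprodne]
    congr 1
    ring
  rw [hident, abs_div, abs_mul]
  have hdenpos : 0 < (q₁ : ℝ) ^ 2 * ((h₂ : ℝ) * ((h₂ : ℝ) - r)) := by positivity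
  rw [abs_of_pos hdenpos, div_le_div_iff₀ hdenpos hHpos]
  have hEb : |E| ≤ δ * H * Q ^ 2 := hquad
  have hrabs : 0 ≤ |(r : ℝ)| := abs_nonneg _
  have h1 : |(r : ℝ)| * |E| ≤ |(r : ℝ)| * (δ * H * Q ^ 2) :=
    mul_le_mul_of_nonneg_left hEb hrabs
  have a1 : H * (H / 2) ≤ (h₂ : ℝ) * ((h₂ : ℝ) - r) :=
    mul_le_mul hh₂ hdiff.le (by linarith) hh2pos.le
  have h2 : Q ^ 2 * (H * (H / 2)) ≤ (q₁ : ℝ) ^ 2 * ((h₂ : ℝ) * ((h₂ : ℝ) - r)) :=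
    mul_le_mul hq1sq a1 (by positivity) (sq_nonneg _)
  have h3 := mul_le_mul_of_nonneg_right h1 hHpos.le
  have h4 := mul_le_mul_of_nonneg_left h2
    (by positivity : (0 : ℝ) ≤ 8 * δ * |(r : ℝ)|)
  nlinarith [h3, h4, mul_nonneg (mul_nonneg hδ.le hrabs) (mul_nonneg (sq_nonneg H) (sq_nonneg Q))]
end

section
/- Let $M, H$ be positive integers and $(a(m,h))_{(m,h) \in \mathbb{Z}^2}$ complex numbers vanishing outside $[1,M] \times [1,H]$. Set $S = \sum_{(m,h)} a(m,h)$. Then for any integers $1 \leq Q \leq M$ and $1 \leq R \leq H$: $|S|^2 \leq C \frac{MH}{QR} \sum_{|q| < Q} \sum_{|r| < R} \left(1 - \frac{|q|}{Q}\right)\left(1 - \frac{|r|}{R}\right) \left|\sum_{(m,h) \in \mathbb{Z}^2} a(m+q, h)\, \overline{a(m, h+r)}\right|$ for an absolute constant $C$. -/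
/-!
Van der Corput's trick on `ℤ²`. With `D = [0, Q) × [0, R)`, every translate of `a` by `-d`,
`d ∈ D`, has the same sum `S`, so `Q R S = ∑_{x ∈ P} ∑_{d ∈ D} a(x + d)` where `P` is the box of
points `x` for which `x + D` meets the support, of size `(M + Q)(H + R) ≤ 4 M H`. Cauchy–Schwarz
over `P` and expanding the square bound `(Q R)² |S|²` by `|P|` times the sum of the
autocorrelations of `a` at the differences `d - d'`, and the difference `(u, v)` arises exactly `(Q - |u|)(R - |v|)` times.
-/

open Finset Function

section Autocorrelation

variable {G : Type*} [AddCommGroup G]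

theorem sum_comp_add_right_eq_finsum {M : Type*} [AddCommMonoid M] {g : G → M} {P : Finset G}
    (t : G) (hP : support (fun x => g (x + t)) ⊆ P) :
    ∑ x ∈ P, g (x + t) = ∑ᶠ y, g y := by
  rw [← finsum_eq_finsetSum_of_support_subset _ hP]
  exact finsum_comp_equiv (Equiv.addRight t)

variable {𝕜 : Type*} [RCLike 𝕜]

/-- Only meaningful for finitely supported `f`: otherwise `∑ᶠ` returns `0`. -/
noncomputable def autocorrelation (f : G → 𝕜) (u : G) : 𝕜 :=
  ∑ᶠ y, f (y + u) * starRingEnd 𝕜 (f y)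

theorem sum_mul_conj_eq_autocorrelation {f : G → 𝕜} {P : Finset G} {d d' : G}
    (hP : ∀ x, f (x + d) * starRingEnd 𝕜 (f (x + d')) ≠ 0 → x ∈ P) :
    ∑ x ∈ P, f (x + d) * starRingEnd 𝕜 (f (x + d')) = autocorrelation f (d - d') := by
  rw [autocorrelation, ← sum_comp_add_right_eq_finsum (P := P) d']
  · simp only [add_add_sub_cancel]
  · intro x hx
    exact hP x (by simpa only [mem_support, add_add_sub_cancel] using hx)

theorem sum_norm_sq_sum_comp_add_eq (f : G → 𝕜) {D P : Finset G}
    (hP : ∀ x, ∀ d ∈ D, f (x + d) ≠ 0 → x ∈ P) :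
    ∑ x ∈ P, ‖∑ d ∈ D, f (x + d)‖ ^ 2 = ‖∑ d ∈ D, ∑ d' ∈ D, autocorrelation f (d - d')‖ := by
  have hsq : ∀ x, (‖∑ d ∈ D, f (x + d)‖ ^ 2 : 𝕜) =
      ∑ d ∈ D, ∑ d' ∈ D, f (x + d) * starRingEnd 𝕜 (f (x + d')) := by
    intro x
    rw [← RCLike.mul_conj, map_sum, sum_mul_sum]
  rw [← abs_of_nonneg (by positivity : 0 ≤ ∑ x ∈ P, ‖∑ d ∈ D, f (x + d)‖ ^ 2),
    ← RCLike.norm_ofReal (K := 𝕜)]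
  push_cast
  simp_rw [hsq]
  rw [sum_comm]
  refine congrArg _ (sum_congr rfl fun d _ => ?_)
  rw [sum_comm]
  exact sum_congr rfl fun d' hd' => sum_mul_conj_eq_autocorrelation fun x hx =>
    hP x d' hd' (by simpa using right_ne_zero_of_mul hx)

theorem card_sq_mul_norm_finsum_sq_le (f : G → 𝕜) {D P : Finset G}
    (hP : ∀ x, ∀ d ∈ D, f (x + d) ≠ 0 → x ∈ P) :
    (#D : ℝ) ^ 2 * ‖∑ᶠ x, f x‖ ^ 2 ≤
      #P * ∑ d ∈ D, ∑ d' ∈ D, ‖autocorrelation f (d - d')‖ := by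
  have hsum : ∑ x ∈ P, ∑ d ∈ D, f (x + d) = #D • ∑ᶠ x, f x := by
    rw [sum_comm, ← sum_const]
    exact sum_congr rfl fun d hd => sum_comp_add_right_eq_finsum d fun x hx => hP x d hd hx
  calc (#D : ℝ) ^ 2 * ‖∑ᶠ x, f x‖ ^ 2 = ‖∑ x ∈ P, ∑ d ∈ D, f (x + d)‖ ^ 2 := by
        rw [hsum, nsmul_eq_mul, norm_mul, RCLike.norm_natCast, mul_pow]
    _ ≤ (∑ x ∈ P, ‖∑ d ∈ D, f (x + d)‖) ^ 2 := by gcongr; exact norm_sum_le _ _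
    _ ≤ #P * ∑ x ∈ P, ‖∑ d ∈ D, f (x + d)‖ ^ 2 := sq_sum_le_card_mul_sum_sq
    _ ≤ #P * ∑ d ∈ D, ∑ d' ∈ D, ‖autocorrelation f (d - d')‖ := by
        rw [sum_norm_sq_sum_comp_add_eq f hP]
        gcongr
        exact (norm_sum_le _ _).trans (sum_le_sum fun d _ => norm_sum_le _ _)

end Autocorrelation

theorem card_filter_sub_eq_Ico (Q : ℕ) (u : ℤ) :
    #{p ∈ Ico (0 : ℤ) Q ×ˢ Ico (0 : ℤ) Q | p.1 - p.2 = u} =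
      #(Ico (max 0 u) (min (Q : ℤ) (Q + u))) := by
  refine card_nbij' Prod.fst (fun q => (q, q - u)) ?_ ?_ ?_ ?_
  · intro p hp
    simp only [coe_filter, mem_product, mem_Ico, Set.mem_ofPred_eq] at hp
    simp only [coe_Ico, Set.mem_Ico, max_le_iff, lt_min_iff]
    omega
  · intro q hq
    simp only [coe_Ico, Set.mem_Ico, max_le_iff, lt_min_iff] at hq
    simp only [coe_filter, mem_product, mem_Ico, Set.mem_ofPred_eq]
    omega
  · intro p hp
    simp only [coe_filter, Set.mem_ofPred_eq] at hp
    ext <;> simp only; omega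
  · intro q _
    rfl

theorem sum_Ico_sum_Ico_sub_eq {M : Type*} [AddCommMonoid M] [Module ℝ M] (Q : ℕ) (g : ℤ → M) :
    ∑ q ∈ Ico (0 : ℤ) Q, ∑ q' ∈ Ico (0 : ℤ) Q, g (q - q') =
      ∑ u ∈ Ioo (-(Q : ℤ)) Q, ((Q : ℝ) - |(u : ℝ)|) • g u := by
  rw [← sum_product', ← sum_fiberwise_of_maps_to (g := fun p : ℤ × ℤ => p.1 - p.2)
    (t := Ioo (-(Q : ℤ)) Q) fun p hp => by
      simp only [mem_product, mem_Ico] at hp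
      simp only [mem_Ioo]
      omega]
  refine sum_congr rfl fun u hu => ?_
  rw [sum_congr rfl fun p hp => by rw [(mem_filter.1 hp).2], sum_const, card_filter_sub_eq_Ico,
    Int.card_Ico, ← Nat.cast_smul_eq_nsmul ℝ]
  have hcard : ((min (Q : ℤ) (Q + u) - max 0 u).toNat : ℤ) = Q - |u| := by
    simp only [mem_Ioo] at hu
    rcases abs_cases u with ⟨h, _⟩ | ⟨h, _⟩ <;> omega
  rw [← Int.cast_natCast, hcard]
  push_cast
  rfl

theorem sum_box_sum_box_sub_eq {M : Type*} [AddCommMonoid M] [Module ℝ M] (Q R : ℕ)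
    (g : ℤ × ℤ → M) :
    ∑ d ∈ Ico (0 : ℤ) Q ×ˢ Ico (0 : ℤ) R, ∑ d' ∈ Ico (0 : ℤ) Q ×ˢ Ico (0 : ℤ) R, g (d - d') =
      ∑ u ∈ Ioo (-(Q : ℤ)) Q, ∑ v ∈ Ioo (-(R : ℤ)) R,
        (((Q : ℝ) - |(u : ℝ)|) * ((R : ℝ) - |(v : ℝ)|)) • g (u, v) := by
  simp_rw [sum_product, Prod.mk_sub_mk]
  rw [sum_congr rfl fun q _ => sum_comm,
    sum_congr rfl fun q _ => sum_congr rfl fun q' _ =>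
      sum_Ico_sum_Ico_sub_eq R fun v => g (q - q', v),
    sum_Ico_sum_Ico_sub_eq Q fun u => ∑ v ∈ Ioo (-(R : ℤ)) R, ((R : ℝ) - |(v : ℝ)|) • g (u, v)]
  simp_rw [smul_sum, mul_smul]

section Box

variable {𝕜 : Type*} [RCLike 𝕜] {a : ℤ → ℤ → 𝕜} {I J : Finset ℤ}

theorem sum_sum_eq_finsum_uncurry (ha : ∀ m h, a m h ≠ 0 → m ∈ I ∧ h ∈ J) :
    ∑ m ∈ I, ∑ h ∈ J, a m h = ∑ᶠ p, uncurry a p := by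
  rw [← sum_product', finsum_eq_finsetSum_of_support_subset]
  · rfl
  · intro p hp
    simpa using ha p.1 p.2 hp

theorem sum_sum_mul_conj_eq_autocorrelation (ha : ∀ m h, a m h ≠ 0 → m ∈ I ∧ h ∈ J)
    (q r : ℤ) :
    ∑ m ∈ I, ∑ h ∈ J, a (m + q) h * starRingEnd 𝕜 (a m (h + r)) =
      autocorrelation (uncurry a) (q, -r) := by
  calc ∑ m ∈ I, ∑ h ∈ J, a (m + q) h * starRingEnd 𝕜 (a m (h + r))
      = ∑ x ∈ I ×ˢ J, uncurry a (x + (q, 0)) * starRingEnd 𝕜 (uncurry a (x + (0, r))) := by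
        rw [sum_product]
        simp
    _ = autocorrelation (uncurry a) ((q, 0) - (0, r)) :=
        sum_mul_conj_eq_autocorrelation fun ⟨m, h⟩ hx => by
          simp only [Prod.mk_add_mk, add_zero, uncurry_apply_pair, ne_eq, mul_eq_zero,
            map_eq_zero, not_or] at hx
          exact mem_product.2 ⟨(ha _ _ hx.2).1, (ha _ _ hx.1).2⟩
    _ = autocorrelation (uncurry a) (q, -r) := by simp

theorem norm_sum_box_sq_le {M H Q R : ℕ}
    (ha : ∀ m h, a m h ≠ 0 → m ∈ Icc 1 (M : ℤ) ∧ h ∈ Icc 1 (H : ℤ)) (hQ : 0 < Q) (hR : 0 < R) :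
    ‖∑ m ∈ Icc 1 (M : ℤ), ∑ h ∈ Icc 1 (H : ℤ), a m h‖ ^ 2 ≤
      ((M + Q) * (H + R) / (Q * R) : ℝ) *
        ∑ u ∈ Ioo (-(Q : ℤ)) Q, ∑ v ∈ Ioo (-(R : ℤ)) R,
          (1 - |(u : ℝ)| / Q) * (1 - |(v : ℝ)| / R) * ‖autocorrelation (uncurry a) (u, v)‖ := by
  have key := card_sq_mul_norm_finsum_sq_le (uncurry a) (D := Ico (0 : ℤ) Q ×ˢ Ico (0 : ℤ) R)
    (P := Icc (1 - (Q : ℤ)) M ×ˢ Icc (1 - (R : ℤ)) H) fun ⟨m, h⟩ ⟨q, r⟩ hd hx => by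
      have := ha _ _ hx
      simp only [Prod.mk_add_mk, mem_product, mem_Ico, mem_Icc] at hd this ⊢
      omega
  set T := ∑ u ∈ Ioo (-(Q : ℤ)) Q, ∑ v ∈ Ioo (-(R : ℤ)) R,
    (1 - |(u : ℝ)| / Q) * (1 - |(v : ℝ)| / R) * ‖autocorrelation (uncurry a) (u, v)‖
  have hweights : ∑ u ∈ Ioo (-(Q : ℤ)) Q, ∑ v ∈ Ioo (-(R : ℤ)) R,
      (((Q : ℝ) - |(u : ℝ)|) * ((R : ℝ) - |(v : ℝ)|)) • ‖autocorrelation (uncurry a) (u, v)‖ =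
        Q * R * T := by
    simp only [T, mul_sum, smul_eq_mul]
    refine sum_congr rfl fun u _ => sum_congr rfl fun v _ => ?_
    field_simp
  have hD : ((Q : ℤ) - 0).toNat * ((R : ℤ) - 0).toNat = Q * R := by
    rw [sub_zero, sub_zero, Int.toNat_natCast, Int.toNat_natCast]
  have hP : ((M : ℤ) + 1 - (1 - Q)).toNat * ((H : ℤ) + 1 - (1 - R)).toNat = (M + Q) * (H + R) := by
    congr 1 <;> omega
  rw [sum_box_sum_box_sub_eq Q R fun d => ‖autocorrelation (uncurry a) d‖, hweights,
    card_product, card_product, Int.card_Ico, Int.card_Ico, Int.card_Icc, Int.card_Icc, hD,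
    hP] at key
  rw [sum_sum_eq_finsum_uncurry ha, div_mul_eq_mul_div, le_div_iff₀ (by positivity)]
  refine le_of_mul_le_mul_left ?_ (by positivity : (0 : ℝ) < Q * R)
  push_cast at key
  linear_combination key

end Box

theorem one_sub_abs_div_nonneg {N : ℕ} {u : ℤ} (hu : u ∈ Ioo (-(N : ℤ)) N) :
    0 ≤ 1 - |(u : ℝ)| / N := by
  rw [sub_nonneg]
  refine div_le_one_of_le₀ (abs_le.2 ⟨?_, ?_⟩) N.cast_nonneg <;>
    exact_mod_cast (by simp only [mem_Ioo] at hu; omega)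

theorem weyl_van_der_corput_AxA :
    ∃ C : ℝ, 0 < C ∧
      ∀ (M H : ℕ), 0 < M → 0 < H →
      ∀ a : ℤ → ℤ → ℂ,
        (∀ m h : ℤ, (m < 1 ∨ (M : ℤ) < m ∨ h < 1 ∨ (H : ℤ) < h) → a m h = 0) →
        ∀ Q R : ℕ, 1 ≤ Q → Q ≤ M → 1 ≤ R → R ≤ H →
        ‖∑ m ∈ Finset.Icc (1 : ℤ) (M : ℤ), ∑ h ∈ Finset.Icc (1 : ℤ) (H : ℤ), a m h‖ ^ 2
          ≤ C * ((M : ℝ) * H / (Q * R)) *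
            ∑ q ∈ Finset.Ioo (-(Q : ℤ)) (Q : ℤ), ∑ r ∈ Finset.Ioo (-(R : ℤ)) (R : ℤ),
              (1 - |(q : ℝ)| / Q) * (1 - |(r : ℝ)| / R) *
                ‖∑ m ∈ Finset.Icc (1 - (Q : ℤ)) (M : ℤ),
                    ∑ h ∈ Finset.Icc (1 - (R : ℤ)) (H : ℤ),
                      a (m + q) h * (starRingEnd ℂ) (a m (h + r))‖ := by
  refine ⟨4, by norm_num, fun M H _ _ a ha Q R hQ hQM hR hRH => ?_⟩
  have hsupp : ∀ m h, a m h ≠ 0 → m ∈ Icc 1 (M : ℤ) ∧ h ∈ Icc 1 (H : ℤ) := by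
    intro m h hmh
    by_contra hout
    exact hmh (ha m h (by simp only [mem_Icc] at hout; omega))
  have hsupp' : ∀ m h, a m h ≠ 0 → m ∈ Icc (1 - Q : ℤ) M ∧ h ∈ Icc (1 - R : ℤ) H := by
    intro m h hmh
    have := hsupp m h hmh
    simp only [mem_Icc] at this ⊢
    omega
  have hcorr : ∀ q ∈ Ioo (-(Q : ℤ)) Q, ∑ r ∈ Ioo (-(R : ℤ)) R,
      (1 - |(q : ℝ)| / Q) * (1 - |(r : ℝ)| / R) * ‖autocorrelation (uncurry a) (q, -r)‖ =
      ∑ v ∈ Ioo (-(R : ℤ)) R,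
      (1 - |(q : ℝ)| / Q) * (1 - |(v : ℝ)| / R) * ‖autocorrelation (uncurry a) (q, v)‖ :=
    fun q _ => sum_equiv (Equiv.neg ℤ) (fun r => by simp only [mem_Ioo, Equiv.neg_apply]; omega)
      (fun r _ => by simp)
  simp_rw [sum_sum_mul_conj_eq_autocorrelation hsupp']
  rw [sum_congr rfl hcorr]
  refine (norm_sum_box_sq_le hsupp hQ hR).trans (mul_le_mul_of_nonneg_right ?_ ?_)
  · have hbox : (M + Q) * (H + R) ≤ 4 * (M * H) := by nlinarith
    rw [← mul_div_assoc]
    exact div_le_div_of_nonneg_right (by exact_mod_cast hbox) (by positivity)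
  · exact sum_nonneg fun u hu => sum_nonneg fun v hv => mul_nonneg
      (mul_nonneg (one_sub_abs_div_nonneg hu) (one_sub_abs_div_nonneg hv)) (norm_nonneg _)
end

section
/- Let $k \geq 1$, $M_1, \dots, M_k$ positive integers, $\mathcal{P} = [1,M_1] \times \cdots \times [1,M_k]$, $I$ a finite set, and for each $i \in I$ a function $\varphi_i : \mathcal{P} \to \mathbb{C}$ such that all mixed partial derivatives of order $r \leq k$ (one derivative in each of $r$ distinct coordinate directions) exist, are continuous, and satisfy $|\partial^r \varphi_i / \partial x_{j_1} \cdots \partial x_{j_r}| \leq D / (M_{j_1} \cdots M_{j_r})$ on $\mathcal{P}$. Then for any complex numbers $a_i(\mathbf{m})$, $\sum_{i \in I} \left| \sum_{\mathbf{m} \in \mathcal{P} \cap \mathbb{N}^k} a_i(\mathbf{m}) \varphi_i(\mathbf{m}) \right| \leq 2^k D \max_{\mathcal{P}'} \sum_{i \in I} \left| \sum_{\mathbf{m} \in \mathcal{P}' \cap \mathbb{N}^k} a_i(\mathbf{m}) \right|$, the maximum over boxes $\mathcal{P}' = [1,M_1'] \times \cdots \times [1,M_k'] \subseteq \mathcal{P}$.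 -/
/-!
Put `A(m) = ∑_{1 ≤ n ≤ m} a(n)`. Summation by parts in all coordinates at once gives
`∑_{1 ≤ n ≤ M} a(n) φ(n) = ∑_{1 ≤ m ≤ M} A(m) Δ_m φ`, where `Δ_m φ` is the mixed difference of `φ`
at `m` in the directions `j` with `m j < M j`. Written against the values `φ(y)`, `Δ_m` has a
kernel that is a product over the coordinates, so the identity reduces to one-dimensional
telescoping. Applying the mean value theorem one direction at a time bounds `‖Δ_m φ‖` by the mixed
partial derivative of `φ` on the unit cube at `m`, hence by `D ∏_{m j < M j} (M j)⁻¹`. These weights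
sum over the box to `∏_j (2 - (M j)⁻¹) ≤ 2 ^ k`, and `∑_i ‖A_i(m)‖` is at most its value at a
maximising corner `M'`.
-/

open Finset

lemma Finset.orderEmbOfFin_insert_of_forall_lt {ι : Type*} [LinearOrder ι] {S : Finset ι} {a : ι}
    (ha : ∀ b ∈ S, b < a) (h : #(insert a S) = #S + 1) :
    ⇑((insert a S).orderEmbOfFin h) = Fin.snoc (α := fun _ => ι) (S.orderEmbOfFin rfl) a := by
  refine (orderEmbOfFin_unique h (fun l => ?_) fun l l' hll' => ?_).symm
  · induction l using Fin.lastCases <;> simp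
  · induction l' using Fin.lastCases with
    | last =>
      induction l using Fin.lastCases with
      | last => exact absurd hll' (lt_irrefl _)
      | cast l => simpa using ha _ (orderEmbOfFin_mem _ _ _)
    | cast l' =>
      obtain ⟨l, rfl⟩ := Fin.exists_castSucc_eq.2 (Fin.ne_last_of_lt hll')
      simpa using hll'

section MixedDifference

variable {ι E F : Type*}

/-- `(-1) ^ #S` times the iterated forward difference of `f` at `x` along the vectors `v j`,
`j ∈ S`. -/
def mixedDiff [AddCommMonoid E] [AddCommGroup F] (S : Finset ι) (v : ι → E) (f : E → F)
    (x : E) : F :=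
  ∑ U ∈ S.powerset, (-1 : ℤ) ^ #U • f (x + ∑ j ∈ U, v j)

section Algebra

variable [AddCommMonoid E] [AddCommGroup F]

@[simp]
lemma mixedDiff_empty (v : ι → E) (f : E → F) (x : E) : mixedDiff ∅ v f x = f x := by
  simp [mixedDiff]

lemma mixedDiff_insert [DecidableEq ι] {S : Finset ι} {a : ι} (ha : a ∉ S) (v : ι → E)
    (f : E → F) (x : E) :
    mixedDiff (insert a S) v f x = mixedDiff S v f x - mixedDiff S v f (x + v a) := by
  rw [mixedDiff, sum_powerset_insert ha, mixedDiff, mixedDiff, sub_eq_add_neg,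
    ← sum_neg_distrib]
  congr 1
  refine sum_congr rfl fun U hU => ?_
  have haU : a ∉ U := fun h => ha (mem_powerset.1 hU h)
  rw [card_insert_of_notMem haU, sum_insert haU, pow_succ, mul_neg_one, neg_smul, add_assoc]

lemma mixedDiff_comp {E' : Type*} [AddCommMonoid E'] (L : E →+ E') (S : Finset ι) (v : ι → E)
    (f : E' → F) (x : E) : mixedDiff S v (f ∘ L) x = mixedDiff S (L ∘ v) f (L x) := by
  simp [mixedDiff, map_sum]

lemma mixedDiff_natCast [DecidableEq ι] {K : Type*} [AddCommMonoidWithOne K] (S : Finset ι)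
    (f : (ι → K) → F) (m : ι → ℕ) :
    mixedDiff S (fun j => (Pi.single j 1 : ι → ℕ)) (fun n => f fun j => (n j : K)) m =
      mixedDiff S (fun j => Pi.single j 1) f (fun j => (m j : K)) := by
  have hsingle : ∀ j, (fun i => ((Pi.single j 1 : ι → ℕ) i : K)) = Pi.single j 1 :=
    fun j => funext fun i => by simp [Pi.single_apply]
  exact (mixedDiff_comp (AddMonoidHom.compLeft (Nat.castAddMonoidHom K) ι) S _ f m).trans
    (congrArg (fun v => mixedDiff S v f fun j => (m j : K)) (funext hsingle))

end Algebra

section Calculus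

variable [NormedAddCommGroup E] [NormedSpace ℝ E] [NormedAddCommGroup F] [NormedSpace ℝ F]

lemma hasDerivAt_mixedDiff {f : E → F} (hf : Differentiable ℝ f) (S : Finset ι) (v : ι → E)
    (x e : E) (t : ℝ) :
    HasDerivAt (fun s : ℝ => mixedDiff S v f (x + s • e))
      (mixedDiff S v (fun y => fderiv ℝ f y e) (x + t • e)) t := by
  refine HasDerivAt.fun_sum fun U _ => ?_
  have hline : HasDerivAt (fun s : ℝ => x + s • e + ∑ j ∈ U, v j) e t := by
    simpa using (((hasDerivAt_id t).smul_const e).const_add x).add_const (∑ j ∈ U, v j)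
  exact ((hf _).hasFDerivAt.comp_hasDerivAt t hline).const_smul ((-1 : ℤ) ^ #U)

lemma iteratedFDeriv_succ_apply_snoc {n : ℕ} {f : E → F} (hf : ContDiff ℝ (n + 1) f) (x : E)
    (m : Fin n → E) (u : E) :
    iteratedFDeriv ℝ (n + 1) f x (Fin.snoc m u) =
      iteratedFDeriv ℝ n (fun y => fderiv ℝ f y u) x m := by
  rw [iteratedFDeriv_succ_apply_right, Fin.init_snoc, Fin.snoc_last,
    iteratedFDeriv_clm_apply_const_apply (hf.fderiv_right le_rfl) le_rfl]

theorem norm_mixedDiff_le [LinearOrder ι] {S : Finset ι} {n : ℕ} (hS : #S = n) (v : ι → E)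
    {f : E → F} (hf : ContDiff ℝ n f) (x : E) {C : ℝ}
    (hC : ∀ t : ι → ℝ, (∀ j ∈ S, t j ∈ Set.Icc 0 1) →
      ‖iteratedFDeriv ℝ n f (x + ∑ j ∈ S, t j • v j) (v ∘ S.orderEmbOfFin hS)‖ ≤ C) :
    ‖mixedDiff S v f x‖ ≤ C := by
  classical
  induction S using Finset.induction_on_max generalizing n f x with
  | empty =>
    obtain rfl : n = 0 := hS.symm
    simpa [iteratedFDeriv_zero_apply] using hC 0 (by simp)
  | insert a S ha ih =>
    have haS : a ∉ S := fun h => lt_irrefl a (ha a h)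
    obtain rfl : n = #S + 1 := by rw [← hS, card_insert_of_notMem haS]
    have hf' : ContDiff ℝ #S (fun y => fderiv ℝ f y (v a)) :=
      (hf.fderiv_right le_rfl).clm_apply contDiff_const
    have hderiv_le : ∀ t ∈ Set.Ico (0 : ℝ) 1,
        ‖mixedDiff S v (fun y => fderiv ℝ f y (v a)) (x + t • v a)‖ ≤ C := by
      refine fun t ht => ih rfl hf' _ fun s hs => ?_
      have hcube : ∀ j ∈ insert a S, Function.update s a t j ∈ Set.Icc 0 1 := by
        intro j hj
        rcases eq_or_ne j a with rfl | hja
        · simpa using Set.Ico_subset_Icc_self ht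
        · simpa [hja] using hs j ((mem_insert.1 hj).resolve_left hja)
      have hpoint : x + ∑ j ∈ insert a S, Function.update s a t j • v j =
          x + t • v a + ∑ j ∈ S, s j • v j := by
        rw [sum_insert haS, Function.update_self, add_assoc]
        congr 2
        exact sum_congr rfl fun j hj => by rw [Function.update_of_ne (ne_of_lt (ha j hj))]
      -- `a` is the largest element of `insert a S`, so it is the last direction of `D^(#S+1) f`
      simpa [hpoint, Finset.orderEmbOfFin_insert_of_forall_lt ha hS, Fin.comp_snoc,
        iteratedFDeriv_succ_apply_snoc hf] using hC _ hcube
    rw [mixedDiff_insert haS, norm_sub_rev]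
    simpa using norm_image_sub_le_of_norm_deriv_le_segment_01'
      (fun t _ => (hasDerivAt_mixedDiff (hf.differentiable (by simp)) S v x (v a) t)
        |>.hasDerivWithinAt) hderiv_le

end Calculus

end MixedDifference

lemma add_sum_single_apply {ι : Type*} [DecidableEq ι] (m : ι → ℕ) (U : Finset ι) (i : ι) :
    (m + ∑ j ∈ U, (Pi.single j 1 : ι → ℕ)) i = m i + if i ∈ U then 1 else 0 := by
  simp [Finset.sum_apply, Pi.single_apply]

section BoxSummation

variable {ι R : Type*} [Fintype ι] [DecidableEq ι] [CommRing R]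

def mixedDiffKernel (m y : ι → ℕ) : R :=
  ∏ j, ((if y j = m j then 1 else 0) - if y j = m j + 1 then 1 else 0)

lemma sum_Icc_ite_eq_sub_ite_eq_succ {s N u : ℕ} (hu : u ≤ N) :
    ∑ t ∈ Icc s N, ((if u = t then (1 : R) else 0) - if u = t + 1 then 1 else 0) =
      if s = u then 1 else 0 := by
  have hshift : ∀ t, (u = t + 1) ↔ (u - 1 = t ∧ 1 ≤ u) := by omega
  simp only [sum_sub_distrib, hshift, ite_and, sum_ite_eq, mem_Icc]
  split_ifs <;> simp_all <;> omega

lemma sum_Icc_mixedDiffKernel {N n y : ι → ℕ} (hy : y ≤ N) :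
    ∑ m ∈ Icc n N, mixedDiffKernel m y = if n = y then (1 : R) else 0 := by
  rw [Pi.Icc_eq]
  unfold mixedDiffKernel
  rw [← prod_univ_sum (fun i => Icc (n i) (N i))
    fun i t => (if y i = t then (1 : R) else 0) - if y i = t + 1 then 1 else 0]
  simp only [sum_Icc_ite_eq_sub_ite_eq_succ (hy _), Fintype.prod_boole, funext_iff]

lemma mixedDiffKernel_add_sum_single (m : ι → ℕ) (U : Finset ι) :
    mixedDiffKernel m (m + ∑ j ∈ U, (Pi.single j 1 : ι → ℕ)) = (-1 : R) ^ #U := by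
  rw [← prod_const, ← Fintype.prod_ite_mem]
  refine prod_congr rfl fun j _ => ?_
  rw [add_sum_single_apply]
  split_ifs <;> simp_all

lemma eq_add_sum_single_of_mixedDiffKernel_ne_zero {m y : ι → ℕ}
    (h : mixedDiffKernel m y ≠ (0 : R)) :
    y = m + ∑ j ∈ {j | y j = m j + 1}, (Pi.single j 1 : ι → ℕ) := by
  funext i
  rw [add_sum_single_apply]
  have : y i = m i ∨ y i = m i + 1 := by
    by_contra hi
    push Not at hi
    exact h (prod_eq_zero (mem_univ i) (by simp [hi.1, hi.2]))
  rcases this with hi | hi <;> simp [hi]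

lemma sum_Icc_mixedDiffKernel_mul {N m : ι → ℕ} (hm : m ∈ Icc 1 N) (g : (ι → ℕ) → R) :
    ∑ y ∈ Icc 1 N, mixedDiffKernel m y * g y =
      mixedDiff {j | m j < N j} (fun j => (Pi.single j 1 : ι → ℕ)) g m := by
  rw [mem_Icc, Pi.le_def, Pi.le_def] at hm
  symm
  refine sum_of_injOn (fun U => m + ∑ j ∈ U, (Pi.single j 1 : ι → ℕ)) ?_ ?_ ?_ ?_
  · intro U _ V _ hUV
    ext i
    have := congrFun hUV i
    simp only [add_sum_single_apply] at this
    split_ifs at this <;> simp_all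
  · intro U hU
    refine mem_coe.2 (mem_Icc.2 ⟨fun i => ?_, fun i => ?_⟩) <;> simp only [add_sum_single_apply]
    · exact (hm.1 i).trans le_self_add
    · split_ifs with hi
      · simpa using mem_powerset.1 hU hi
      · exact hm.2 i
  · intro y hy hyU
    by_contra hne
    have hy' := eq_add_sum_single_of_mixedDiffKernel_ne_zero (left_ne_zero_of_mul hne)
    rw [mem_Icc, Pi.le_def, Pi.le_def] at hy
    refine hyU ⟨_, mem_powerset.2 fun j hj => ?_, hy'.symm⟩
    have := hy.2 j
    simp only [mem_filter, mem_univ, true_and] at hj ⊢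
    omega
  · intro U _
    rw [mixedDiffKernel_add_sum_single, zsmul_eq_mul]
    push_cast
    rfl

theorem sum_Icc_by_parts (N : ι → ℕ) (a g : (ι → ℕ) → R) :
    ∑ n ∈ Icc 1 N, a n * g n = ∑ m ∈ Icc 1 N, (∑ n ∈ Icc 1 m, a n) *
      mixedDiff {j | m j < N j} (fun j => (Pi.single j 1 : ι → ℕ)) g m := by
  have hdelta : ∀ n ∈ Icc 1 N,
      ∑ y ∈ Icc 1 N, ∑ m ∈ Icc n N, a n * (mixedDiffKernel m y * g y) = a n * g n := by
    intro n hn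
    simp_rw [← mul_sum, ← sum_mul]
    rw [sum_congr rfl fun y hy => by rw [sum_Icc_mixedDiffKernel (mem_Icc.1 hy).2]]
    simp [hn]
  calc ∑ n ∈ Icc 1 N, a n * g n
      = ∑ n ∈ Icc 1 N, ∑ m ∈ Icc n N, ∑ y ∈ Icc 1 N, a n * (mixedDiffKernel m y * g y) :=
        sum_congr rfl fun n hn => by rw [sum_comm, hdelta n hn]
    _ = ∑ m ∈ Icc 1 N, ∑ n ∈ Icc 1 m, ∑ y ∈ Icc 1 N, a n * (mixedDiffKernel m y * g y) :=
        sum_comm' fun n m => by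
          simp only [mem_Icc]
          exact ⟨fun h => ⟨⟨h.1.1, h.2.1⟩, h.1.1.trans h.2.1, h.2.2⟩,
            fun h => ⟨⟨h.1.1, h.1.2.trans h.2.2⟩, h.1.2, h.2.2⟩⟩
    _ = _ := sum_congr rfl fun m hm => by rw [← sum_Icc_mixedDiffKernel_mul hm, sum_mul_sum]

lemma sum_Icc_ite_lt_inv_le_two (N : ℕ) :
    ∑ t ∈ Icc 1 N, (if t < N then (N : ℝ)⁻¹ else 1) ≤ 2 :=
  calc ∑ t ∈ Icc 1 N, (if t < N then (N : ℝ)⁻¹ else 1)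
      ≤ ∑ t ∈ Icc 1 N, ((N : ℝ)⁻¹ + if t = N then 1 else 0) := by
        refine sum_le_sum fun t ht => ?_
        have := (mem_Icc.1 ht).2
        split_ifs <;> first | omega | simp
    _ ≤ 2 := by
        rw [sum_add_distrib, sum_const, Nat.card_Icc, Nat.add_sub_cancel, nsmul_eq_mul,
          sum_ite_eq']
        have := mul_inv_le_one (a := (N : ℝ))
        split_ifs <;> linarith

lemma sum_Icc_inv_prod_le (N : ι → ℕ) :
    ∑ m ∈ Icc 1 N, (∏ j ∈ {j | m j < N j}, (N j : ℝ))⁻¹ ≤ 2 ^ Fintype.card ι :=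
  calc ∑ m ∈ Icc 1 N, (∏ j ∈ {j | m j < N j}, (N j : ℝ))⁻¹
      = ∏ j, ∑ t ∈ Icc 1 (N j), (if t < N j then (N j : ℝ)⁻¹ else 1) := by
        rw [Pi.Icc_eq, prod_univ_sum]
        exact sum_congr rfl fun m _ => by rw [← prod_inv_distrib, prod_filter]
    _ ≤ ∏ _j : ι, (2 : ℝ) :=
        prod_le_prod (fun j _ => sum_nonneg fun t _ => by positivity)
          fun j _ => sum_Icc_ite_lt_inv_le_two (N j)
    _ = 2 ^ Fintype.card ι := by rw [prod_const, card_univ]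

end BoxSummation

lemma norm_mixedDiff_natCast_le {ι F : Type*} [Fintype ι] [LinearOrder ι]
    [NormedAddCommGroup F] [NormedSpace ℝ F] {N m : ι → ℕ} (hm : m ∈ Icc 1 N)
    {φ : (ι → ℝ) → F} (hφ : ContDiff ℝ (Fintype.card ι) φ) {D : ℝ}
    (hbound : ∀ x ∈ Set.Icc 1 (fun j => (N j : ℝ)), ∀ r : ℕ, r ≤ Fintype.card ι →
      ∀ j : Fin r → ι, StrictMono j →
        ‖iteratedFDeriv ℝ r φ x (fun l => Pi.single (j l) 1)‖ ≤ D / ∏ l, (N (j l) : ℝ)) :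
    ‖mixedDiff {j | m j < N j} (fun j => (Pi.single j 1 : ι → ℕ))
      (fun n => φ fun j => (n j : ℝ)) m‖ ≤ D / ∏ j ∈ {j | m j < N j}, (N j : ℝ) := by
  set S : Finset ι := {j | m j < N j}
  have hS : #S ≤ Fintype.card ι := card_le_univ S
  have hprod : ∏ l, (N (S.orderEmbOfFin rfl l) : ℝ) = ∏ j ∈ S, (N j : ℝ) := by
    conv_rhs => rw [← map_orderEmbOfFin_univ S rfl, prod_map]
    rfl
  rw [mixedDiff_natCast, ← hprod]
  rw [mem_Icc, Pi.le_def, Pi.le_def] at hm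
  refine norm_mixedDiff_le rfl _ (hφ.of_le (by exact_mod_cast hS)) _ fun t ht =>
    hbound _ ⟨fun i => ?_, fun i => ?_⟩ _ hS _ (S.orderEmbOfFin rfl).strictMono <;>
    simp only [Pi.add_apply, Finset.sum_apply, Pi.smul_apply, Pi.single_apply, smul_eq_mul,
      mul_ite, mul_one, mul_zero, sum_ite_eq, Pi.one_apply]
  · have h1 : (1 : ℝ) ≤ m i := by exact_mod_cast hm.1 i
    split_ifs with hi
    · linarith [(ht i hi).1]
    · simpa using h1
  · split_ifs with hi
    · have : (m i : ℝ) + 1 ≤ N i := by exact_mod_cast (mem_filter.1 hi).2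
      linarith [(ht i hi).2]
    · simpa using (Nat.cast_le.2 (hm.2 i) : (m i : ℝ) ≤ N i)

theorem multidimensional_partial_summation_general
    (k : ℕ) (M : Fin k → ℕ) (hM : ∀ j, 0 < M j)
    (I : Type) [Fintype I] (D : ℝ) (hD : 0 < D)
    (φ : I → (Fin k → ℝ) → ℂ) (hφ : ∀ i, ContDiff ℝ k (φ i))
    (hbound : ∀ i, ∀ x ∈ Set.Icc (fun _ => (1 : ℝ)) (fun j => (M j : ℝ)),
      ∀ r : ℕ, r ≤ k → ∀ j : Fin r → Fin k, StrictMono j →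
        ‖iteratedFDeriv ℝ r (φ i) x (fun l => Pi.single (j l) (1 : ℝ))‖
          ≤ D / ∏ l, (M (j l) : ℝ))
    (a : I → (Fin k → ℕ) → ℂ) :
    ∃ M' : Fin k → ℕ, (∀ j, 1 ≤ M' j ∧ M' j ≤ M j) ∧
      ∑ i : I, ‖∑ m ∈ Fintype.piFinset (fun j => Finset.Icc 1 (M j)),
          a i m * φ i (fun j => (m j : ℝ))‖
        ≤ 2 ^ k * D *
          ∑ i : I, ‖∑ m ∈ Fintype.piFinset (fun j => Finset.Icc 1 (M' j)), a i m‖ := by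
  simp only [← Pi.Icc_eq]
  set A : I → (Fin k → ℕ) → ℂ := fun i m => ∑ n ∈ Icc 1 m, a i n
  set w : (Fin k → ℕ) → ℝ := fun m => D / ∏ j ∈ {j | m j < M j}, (M j : ℝ)
  obtain ⟨M', hM', hmax⟩ := exists_max_image (Icc 1 M) (fun m => ∑ i, ‖A i m‖)
    ⟨1, mem_Icc.2 ⟨le_rfl, hM⟩⟩
  refine ⟨M', fun j => ⟨(mem_Icc.1 hM').1 j, (mem_Icc.1 hM').2 j⟩, ?_⟩
  calc ∑ i, ‖∑ n ∈ Icc 1 M, a i n * φ i (fun j => (n j : ℝ))‖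
      ≤ ∑ i, ∑ m ∈ Icc 1 M, ‖A i m‖ * w m := sum_le_sum fun i _ => by
        rw [sum_Icc_by_parts]
        refine (norm_sum_le _ _).trans <| sum_le_sum fun m hm => ?_
        rw [norm_mul]
        gcongr
        exact norm_mixedDiff_natCast_le hm (by simpa using hφ i)
          fun x hx r hr => hbound i x hx r (by simpa using hr)
    _ = ∑ m ∈ Icc 1 M, (∑ i, ‖A i m‖) * w m := by rw [sum_comm]; simp only [sum_mul]
    _ ≤ ∑ m ∈ Icc 1 M, (∑ i, ‖A i M'‖) * w m :=
        sum_le_sum fun m hm => mul_le_mul_of_nonneg_right (hmax m hm) (by positivity)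
    _ = (∑ i, ‖A i M'‖) * (D * ∑ m ∈ Icc 1 M, (∏ j ∈ {j | m j < M j}, (M j : ℝ))⁻¹) := by
        simp only [w, div_eq_mul_inv, ← mul_sum]
    _ ≤ (∑ i, ‖A i M'‖) * (D * 2 ^ k) := by
        gcongr
        simpa using sum_Icc_inv_prod_le M
    _ = 2 ^ k * D * ∑ i, ‖A i M'‖ := by ring

theorem multidimensional_partial_summation
    (k : ℕ) (hk : 1 ≤ k) (M : Fin k → ℕ) (hM : ∀ j, 0 < M j)
    (I : Type) [Fintype I] (D : ℝ) (hD : 0 < D)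
    (φ : I → (Fin k → ℝ) → ℂ) (hφ : ∀ i, ContDiff ℝ k (φ i))
    (hbound : ∀ i, ∀ x ∈ Set.Icc (fun _ => (1 : ℝ)) (fun j => (M j : ℝ)),
      ∀ r : ℕ, r ≤ k → ∀ j : Fin r → Fin k, StrictMono j →
        ‖iteratedFDeriv ℝ r (φ i) x (fun l => Pi.single (j l) (1 : ℝ))‖
          ≤ D / ∏ l, (M (j l) : ℝ))
    (a : I → (Fin k → ℕ) → ℂ) :
    ∃ M' : Fin k → ℕ, (∀ j, 1 ≤ M' j ∧ M' j ≤ M j) ∧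
      ∑ i : I, ‖∑ m ∈ Fintype.piFinset (fun j => Finset.Icc 1 (M j)),
          a i m * φ i (fun j => (m j : ℝ))‖
        ≤ 2 ^ k * D *
          ∑ i : I, ‖∑ m ∈ Fintype.piFinset (fun j => Finset.Icc 1 (M' j)), a i m‖ :=
  multidimensional_partial_summation_general k M hM I D hD φ hφ hbound a
end

section
/- Let $g : [1, M] \to \mathbb{R}$ be $C^3$ with $\mu \leq |g'''(x)| \leq C\mu$ for $1 \leq x \leq M$, where $0 < \mu < 1$ and $M \leq \mu^{-1/2}$. Let $u : [1, M] \to \mathbb{R}$ be $C^1$ with $|u'(x)| \leq \mu^{1/2}$. Then $\left|\sum_{m=1}^{M} e^{2\pi i(g(m)+u(m))}\right| \leq C_1 \left(\max_{1 \leq M' \leq M} \left|\sum_{m=1}^{M'} e^{2\pi i g(m)}\right| \right)$ for a constant $C_1$ depending only on $C$; in particular, assuming the third derivative test $\left|\sum_{m=1}^{M'} e^{2\pi i g(m)}\right| \leq C_2(M'\mu^{1/6} + \mu^{-1/3})$, one gets $\left|\sum_{m=1}^{M} e^{2\pi i(g(m)+u(m))}\right| \leq C_3(M\mu^{1/6}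 + \mu^{-1/3})$. -/
/-!
Write each term as `e(u m) * e(g m)`, where `e(x) = exp(2πix)`, and sum by parts. The weights
`e(u m)` have modulus one and, by the mean value theorem, total variation at most
`2π (M - 1) μ^{1/2} ≤ 2π`; hence the sum is at most `1 + 2π` times the largest partial sum of
`e(g m)`, and any bound on those partial sums that is monotone in `M'` carries over.
-/

open Finset

theorem norm_sum_range_mul_le {R : Type*} [NormedRing R] (f g : ℕ → R) (n : ℕ) {T : ℝ}
    (hT : ∀ k ≤ n, ‖∑ i ∈ range k, g i‖ ≤ T) :
    ‖∑ i ∈ range n, f i * g i‖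
      ≤ (‖f (n - 1)‖ + ∑ i ∈ range (n - 1), ‖f (i + 1) - f i‖) * T := by
  have hparts := sum_range_by_parts f g n
  simp only [smul_eq_mul] at hparts
  rw [hparts]
  calc ‖f (n - 1) * ∑ i ∈ range n, g i
          - ∑ i ∈ range (n - 1), (f (i + 1) - f i) * ∑ j ∈ range (i + 1), g j‖
      ≤ ‖f (n - 1)‖ * T + ∑ i ∈ range (n - 1), ‖f (i + 1) - f i‖ * T := by
        refine (norm_sub_le _ _).trans (add_le_add ?_ ((norm_sum_le _ _).trans ?_))
        · exact (norm_mul_le _ _).trans (by gcongr; exact hT n le_rfl)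
        · refine sum_le_sum fun i hi => (norm_mul_le _ _).trans ?_
          gcongr
          exact hT _ (by have := mem_range.mp hi; omega)
    _ = _ := by rw [add_mul, sum_mul]

theorem sum_Icc_one_eq_sum_range {M : Type*} [AddCommMonoid M] (f : ℕ → M) (n : ℕ) :
    ∑ m ∈ Icc 1 n, f m = ∑ i ∈ range n, f (i + 1) := by
  rw [← Ico_add_one_right_eq_Icc, sum_Ico_eq_sum_range]
  simp [add_comm]

theorem norm_sum_Icc_le_sup' {E : Type*} [SeminormedAddCommGroup E] (a : ℕ → E) {n : ℕ}
    (hn : 0 < n) :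
    ∀ k ≤ n, ‖∑ m ∈ Icc 1 k, a m‖
      ≤ (Icc 1 n).sup' (nonempty_Icc.mpr hn) fun k => ‖∑ m ∈ Icc 1 k, a m‖ := by
  have hle : ∀ k ∈ Icc 1 n, ‖∑ m ∈ Icc 1 k, a m‖
      ≤ (Icc 1 n).sup' (nonempty_Icc.mpr hn) fun k => ‖∑ m ∈ Icc 1 k, a m‖ :=
    fun k hk => le_sup' (fun k => ‖∑ m ∈ Icc 1 k, a m‖) hk
  intro k hk
  rcases k.eq_zero_or_pos with rfl | hk0
  · simpa using (norm_nonneg _).trans (hle 1 (Finset.mem_Icc.mpr ⟨le_rfl, hn⟩))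
  · exact hle k (Finset.mem_Icc.mpr ⟨hk0, hk⟩)

theorem norm_cexp_two_pi_I_mul (a : ℝ) : ‖Complex.exp (2 * Real.pi * Complex.I * a)‖ = 1 := by
  rw [Complex.norm_exp]; simp

theorem norm_cexp_two_pi_I_mul_sub_le (a b : ℝ) :
    ‖Complex.exp (2 * Real.pi * Complex.I * a) - Complex.exp (2 * Real.pi * Complex.I * b)‖
      ≤ 2 * Real.pi * |a - b| := by
  have hfactor :
      Complex.exp (2 * Real.pi * Complex.I * a) - Complex.exp (2 * Real.pi * Complex.I * b)
        = Complex.exp (2 * Real.pi * Complex.I * b)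
          * (Complex.exp (Complex.I * ((2 * Real.pi * (a - b) : ℝ) : ℂ)) - 1) := by
    rw [mul_sub, mul_one, ← Complex.exp_add]; push_cast; ring_nf
  rw [hfactor, norm_mul, norm_cexp_two_pi_I_mul, one_mul]
  refine Real.norm_exp_I_mul_ofReal_sub_one_le.trans_eq ?_
  rw [Real.norm_eq_abs, abs_mul, abs_of_pos Real.two_pi_pos]

theorem mul_rpow_half_le_one {x μ : ℝ} (hμ : 0 < μ) (hx : x ≤ μ ^ (-(1 : ℝ) / 2)) :
    x * μ ^ ((1 : ℝ) / 2) ≤ 1 := by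
  calc x * μ ^ ((1 : ℝ) / 2) ≤ μ ^ (-(1 : ℝ) / 2) * μ ^ ((1 : ℝ) / 2) := by gcongr
    _ = 1 := by rw [← Real.rpow_add hμ]; norm_num

theorem norm_sum_Icc_cexp_mul_le (u : ℝ → ℝ) (a : ℕ → ℂ) (M : ℕ) {δ T : ℝ}
    (hu : ∀ x ∈ Set.Icc (1 : ℝ) M, DifferentiableAt ℝ u x)
    (hu' : ∀ x ∈ Set.Icc (1 : ℝ) M, |deriv u x| ≤ δ)
    (hT : ∀ k ≤ M, ‖∑ m ∈ Icc 1 k, a m‖ ≤ T) :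
    ‖∑ m ∈ Icc 1 M, Complex.exp (2 * Real.pi * Complex.I * u m) * a m‖
      ≤ (1 + 2 * Real.pi * (M - 1 : ℕ) * δ) * T := by
  set F : ℕ → ℂ := fun i => Complex.exp (2 * Real.pi * Complex.I * u (i + 1 : ℕ))
  have hstep : ∀ i ∈ range (M - 1), ‖F (i + 1) - F i‖ ≤ 2 * Real.pi * δ := by
    intro i hi
    have hiM : ((i + 2 : ℕ) : ℝ) ≤ M := by
      have := mem_range.mp hi; exact_mod_cast (by omega : i + 2 ≤ M)
    have hmem : ∀ j ≤ i + 1, ((j + 1 : ℕ) : ℝ) ∈ Set.Icc (1 : ℝ) M := fun j hj =>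
      ⟨by simp, le_trans (by exact_mod_cast (by omega : j + 1 ≤ i + 2)) hiM⟩
    have hmvt := (convex_Icc (1 : ℝ) M).norm_image_sub_le_of_norm_deriv_le hu
      hu' (hmem i (by omega)) (hmem (i + 1) le_rfl)
    refine (norm_cexp_two_pi_I_mul_sub_le _ _).trans ?_
    gcongr
    simpa using hmvt
  have hT0 : 0 ≤ T := by simpa using hT 0 M.zero_le
  have hvar :
      ∑ i ∈ range (M - 1), ‖F (i + 1) - F i‖ ≤ (M - 1 : ℕ) * (2 * Real.pi * δ) := by
    simpa using sum_le_card_nsmul _ _ _ hstep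
  simp only [sum_Icc_one_eq_sum_range] at hT ⊢
  refine (norm_sum_range_mul_le F (fun i => a (i + 1)) M hT).trans ?_
  rw [norm_cexp_two_pi_I_mul]
  gcongr
  linarith

theorem short_sum_partial_summation :
    ∀ C C₂ : ℝ, 0 < C → 0 < C₂ → ∃ C₁ C₃ : ℝ, 0 < C₁ ∧ 0 < C₃ ∧
      ∀ (M : ℕ) (μ : ℝ) (g u : ℝ → ℝ) (hM : 0 < M),
        0 < μ → μ < 1 → (M : ℝ) ≤ μ ^ (-(1 : ℝ) / 2) →
        ContDiff ℝ 3 g → ContDiff ℝ 1 u →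
        (∀ x ∈ Set.Icc (1 : ℝ) (M : ℝ),
          μ ≤ |iteratedDeriv 3 g x| ∧ |iteratedDeriv 3 g x| ≤ C * μ) →
        (∀ x ∈ Set.Icc (1 : ℝ) (M : ℝ), |deriv u x| ≤ μ ^ ((1 : ℝ) / 2)) →
        (‖∑ m ∈ Finset.Icc 1 M,
              Complex.exp (2 * Real.pi * Complex.I * ((g m + u m : ℝ) : ℂ))‖
            ≤ C₁ * (Finset.Icc 1 M).sup' (Finset.nonempty_Icc.mpr hM)
                (fun M' => ‖∑ m ∈ Finset.Icc 1 M',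
                    Complex.exp (2 * Real.pi * Complex.I * ((g m : ℝ) : ℂ))‖)) ∧
        ((∀ M' : ℕ, 1 ≤ M' → M' ≤ M →
            ‖∑ m ∈ Finset.Icc 1 M',
                Complex.exp (2 * Real.pi * Complex.I * ((g m : ℝ) : ℂ))‖
              ≤ C₂ * ((M' : ℝ) * μ ^ ((1 : ℝ) / 6) + μ ^ (-(1 : ℝ) / 3))) →
          ‖∑ m ∈ Finset.Icc 1 M,
              Complex.exp (2 * Real.pi * Complex.I * ((g m + u m : ℝ) : ℂ))‖
            ≤ C₃ * ((M : ℝ) * μ ^ ((1 : ℝ) / 6) + μ ^ (-(1 : ℝ) / 3))) := by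
  intro C C₂ _ hC₂
  refine ⟨1 + 2 * Real.pi, (1 + 2 * Real.pi) * C₂, by positivity, by positivity, ?_⟩
  intro M μ g u hM hμ _ hMμ _ hu _ hu'
  have hT := norm_sum_Icc_le_sup' (fun m : ℕ => Complex.exp (2 * Real.pi * Complex.I * g m)) hM
  set T := (Finset.Icc 1 M).sup' (Finset.nonempty_Icc.mpr hM)
      (fun M' => ‖∑ m ∈ Finset.Icc 1 M',
          Complex.exp (2 * Real.pi * Complex.I * ((g m : ℝ) : ℂ))‖)
  have hshort : ((M - 1 : ℕ) : ℝ) * μ ^ ((1 : ℝ) / 2) ≤ 1 :=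
    mul_rpow_half_le_one hμ (le_trans (by norm_cast; omega) hMμ)
  have hmain :
      ‖∑ m ∈ Icc 1 M, Complex.exp (2 * Real.pi * Complex.I * ((g m + u m : ℝ) : ℂ))‖
        ≤ (1 + 2 * Real.pi) * T := by
    have hsplit : ∀ m : ℕ, Complex.exp (2 * Real.pi * Complex.I * ((g m + u m : ℝ) : ℂ))
        = Complex.exp (2 * Real.pi * Complex.I * u m)
          * Complex.exp (2 * Real.pi * Complex.I * g m) := fun m => by
      rw [← Complex.exp_add]; push_cast; ring_nf
    simp only [hsplit]
    refine (norm_sum_Icc_cexp_mul_le u _ M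
      (fun x _ => (hu.differentiable one_ne_zero).differentiableAt) hu' hT).trans ?_
    refine mul_le_mul_of_nonneg_right ?_ ((norm_nonneg _).trans (hT 0 M.zero_le))
    nlinarith [Real.pi_pos]
  refine ⟨hmain, fun hthird => hmain.trans ?_⟩
  have hT_le : T ≤ C₂ * ((M : ℝ) * μ ^ ((1 : ℝ) / 6) + μ ^ (-(1 : ℝ) / 3)) := by
    refine sup'_le _ _ fun k hk => ?_
    obtain ⟨hk1, hkM⟩ := Finset.mem_Icc.mp hk
    refine (hthird k hk1 hkM).trans ?_
    gcongr
  rw [mul_assoc]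
  gcongr
end

section
/- Let $\delta, R, H, Q > 0$ with $H \geq 2R$ and suppose integers $r, d, q_1, q_2, h_1, h_2$ satisfy $0 < |r| < R$, $Q \leq |q_i| < 2Q$, $H \leq h_i < 2H$, $q_1 q_2 > 0$, $rd + h_1 q_1 - h_2 q_2 = 0$, and $|(h_1 q_1 + h_2 q_2)d + h_1 q_1^2 - h_2 q_2^2| \leq \delta H Q^2$. Then $|d| \leq C(1 + \delta) Q$ for an absolute constant $C$. -/
set_option maxHeartbeats 1000000 in
theorem d_localization :
    ∃ C : ℝ, 0 < C ∧
      ∀ (R Q H δ : ℝ), 0 < R → 0 < Q → 0 < H → 0 < δ → 2 * R ≤ H →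
      ∀ r d q₁ q₂ h₁ h₂ : ℤ,
        r ≠ 0 → |(r : ℝ)| < R →
        Q ≤ |(q₁ : ℝ)| → |(q₁ : ℝ)| < 2 * Q →
        Q ≤ |(q₂ : ℝ)| → |(q₂ : ℝ)| < 2 * Q →
        H ≤ (h₁ : ℝ) → (h₁ : ℝ) < 2 * H →
        H ≤ (h₂ : ℝ) → (h₂ : ℝ) < 2 * H →
        0 < q₁ * q₂ →
        r * d + h₁ * q₁ - h₂ * q₂ = 0 →
        |((h₁ : ℝ) * q₁ + (h₂ : ℝ) * q₂) * d + (h₁ : ℝ) * q₁ ^ 2 - (h₂ : ℝ) * q₂ ^ 2|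
          ≤ δ * H * Q ^ 2 →
        |(d : ℝ)| ≤ C * (1 + δ) * Q := by
  refine ⟨8, by norm_num, ?_⟩
  intro R Q H δ hR hQ hH hδ hRH r d q₁ q₂ h₁ h₂ hr hrR hq1l hq1u hq2l hq2u
    hh1l hh1u hh2l hh2u hqq heq hbound
  have hqq' : (0:ℝ) < (q₁:ℝ) * (q₂:ℝ) := by exact_mod_cast hqq
  -- lower bound on |A|
  set A : ℝ := (h₁ : ℝ) * q₁ + (h₂ : ℝ) * q₂ with hA
  have habsA : 2 * H * Q ≤ |A| := by
    rcases mul_pos_iff.mp hqq' with ⟨h1, h2⟩ | ⟨h1, h2⟩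
    · rw [abs_of_pos h1] at hq1l
      rw [abs_of_pos h2] at hq2l
      rw [abs_of_nonneg (by nlinarith : (0:ℝ) ≤ A)]
      nlinarith
    · rw [abs_of_neg h1] at hq1l
      rw [abs_of_neg h2] at hq2l
      rw [abs_of_nonpos (by nlinarith : A ≤ 0)]
      nlinarith
  -- bound on |A * d|
  have hq1sq : (q₁:ℝ)^2 ≤ 4 * Q^2 := by nlinarith [sq_abs ((q₁:ℝ)), abs_nonneg ((q₁:ℝ))]
  have hq2sq : (q₂:ℝ)^2 ≤ 4 * Q^2 := by nlinarith [sq_abs ((q₂:ℝ)), abs_nonneg ((q₂:ℝ))]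
  have e1 : (h₁:ℝ) * q₁^2 ≤ 8*H*Q^2 := by
    nlinarith [mul_nonneg (by linarith : (0:ℝ) ≤ 2*H - h₁) (sq_nonneg ((q₁:ℝ))),
      mul_nonneg hH.le (by linarith : (0:ℝ) ≤ 4*Q^2 - (q₁:ℝ)^2)]
  have e2 : (h₂:ℝ) * q₂^2 ≤ 8*H*Q^2 := by
    nlinarith [mul_nonneg (by linarith : (0:ℝ) ≤ 2*H - h₂) (sq_nonneg ((q₂:ℝ))),
      mul_nonneg hH.le (by linarith : (0:ℝ) ≤ 4*Q^2 - (q₂:ℝ)^2)]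
  have e1' : (0:ℝ) ≤ (h₁:ℝ) * q₁^2 := mul_nonneg (by linarith) (sq_nonneg _)
  have e2' : (0:ℝ) ≤ (h₂:ℝ) * q₂^2 := mul_nonneg (by linarith) (sq_nonneg _)
  have hAd : |A * d| ≤ (16 + δ) * H * Q^2 := by
    set X : ℝ := (h₁:ℝ) * q₁^2 - (h₂:ℝ) * q₂^2 with hX
    have h1 : |A * d| ≤ |A * d + X| + |X| := by
      simpa using abs_add_le (A * (d:ℝ) + X) (-X)
    have h2 : |X| ≤ 16 * H * Q^2 := by
      rw [abs_sub_le_iff]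
      constructor <;> linarith
    have h3 : |A * d + X| ≤ δ * H * Q^2 := by
      have hrw : A * (d:ℝ) + X = A * d + (h₁:ℝ) * q₁^2 - (h₂:ℝ) * q₂^2 := by rw [hX]; ring
      rw [hrw]; exact hbound
    linarith
  rw [abs_mul] at hAd
  have hd : 2 * H * Q * |(d:ℝ)| ≤ (16 + δ) * H * Q^2 :=
    le_trans (by nlinarith [abs_nonneg ((d:ℝ))]) hAd
  nlinarith [abs_nonneg ((d:ℝ)), mul_pos hH hQ, mul_nonneg (mul_nonneg hH.le hQ.le) hδ.le]
end
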